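/- arXiv:2507.16484 — 6 statements merged into one kernel-verified Lean document; each statement's English description precedes it below -/
import Mathlib

section
/- Let $A \in \mathbb{R}^{n\times n}$ be symmetric and let $T_N \in \mathbb{R}^{Np\times Np}$ be symmetric with spectral decomposition $T_N = S_N \Theta_N S_N^T$, where $S_N$ is orthogonal with columns $s_1,\dots,s_{Np}$ and $\Theta_N = \mathrm{diag}(\theta_1,\dots,\theta_{Np})$. Suppose $V_N = [v_1,\dots,v_N] \in \mathbb{R}^{n\times Np}$ (with block columns $v_j \in \mathbb{R}^{n\times p}$) and $D = [\Delta v_1,\dots,\Delta v_N] \in \mathbb{R}^{n\times Np}$ satisfy $A V_N = V_N T_N + D$ with $\|\Delta v_j\| \le \epsilon_2 \|A\|$ for all $j = 1,\dots,N$ and some $\epsilon_2 > 0$. Define the Ritz vectors $z_i = V_N s_i$. Assume there exists $\epsilon_1 > 0$ such that for every index $i$ with $\|z_i\| < 0.5$ there exists an index $j$ with $\|z_j\| \ge 0.5$ and $|\theta_i - \theta_j| \le \epsilon_1 \|A\|$. Then every eigenvalue $\theta$ of $T_N$ satisfies $\min_{\lambda \in \mathrm{spec}(A)} |\lambda - \theta|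 \le 3\max(\sqrt{N}\,\epsilon_2,\ \epsilon_1)\,\|A\|$. -/
open Matrix
open scoped Matrix.Norms.L2Operator

noncomputable section

/-- The `j`-th block column (of width `p`) of an `n × (N·p)` matrix. -/
def blockCol {n N p : ℕ} (M : Matrix (Fin n) (Fin N × Fin p) ℝ) (j : Fin N) :
    Matrix (Fin n) (Fin p) ℝ :=
  Matrix.of fun i t => M i (j, t)

/-- A vector regarded as a one-column matrix. -/
def col1 {α : Type*} (v : α → ℝ) : Matrix α (Fin 1) ℝ :=
  Matrix.of fun i _ => v i


lemma norm_col1 {α : Type*} [Fintype α] [DecidableEq α] (v : α → ℝ) :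
    ‖col1 v‖ = ‖(WithLp.equiv 2 (α → ℝ)).symm v‖ := by
  rw [Matrix.l2_opNorm_def]
  set vE : EuclideanSpace ℝ α := (WithLp.equiv 2 (α → ℝ)).symm v with hvE
  set f := (Matrix.toEuclideanLin (𝕜 := ℝ) (m := α) (n := Fin 1)).trans
      LinearMap.toContinuousLinearMap (col1 v) with hf
  have key : ∀ x : EuclideanSpace ℝ (Fin 1), f x = x 0 • vE := by
    intro x
    ext i
    simp [f, Matrix.toEuclideanLin_apply, col1, Matrix.mulVec, dotProduct, vE,
      Fin.sum_univ_one, mul_comm]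
  apply le_antisymm
  · apply ContinuousLinearMap.opNorm_le_bound _ (norm_nonneg vE)
    intro x
    rw [key, norm_smul]
    have hx0 : ‖x 0‖ ≤ ‖x‖ := by
      rw [EuclideanSpace.norm_eq, Fin.sum_univ_one, Real.sqrt_sq_eq_abs]
      exact le_abs_self _
    calc ‖x 0‖ * ‖vE‖ ≤ ‖x‖ * ‖vE‖ := mul_le_mul_of_nonneg_right hx0 (norm_nonneg _)
      _ = ‖vE‖ * ‖x‖ := mul_comm _ _
  · have h := f.le_opNorm (EuclideanSpace.single (0 : Fin 1) (1 : ℝ))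
    rw [key] at h
    simpa [EuclideanSpace.norm_single] using h

lemma eig_residual {n : ℕ} {A : Matrix (Fin n) (Fin n) ℝ} (hA : A.IsHermitian)
    (θ : ℝ) (w : EuclideanSpace ℝ (Fin n)) (hw : w ≠ 0) :
    ∃ l : Fin n, |hA.eigenvalues l - θ| * ‖w‖ ≤ ‖Matrix.toEuclideanLin A w - θ • w‖ := by
  have hn : Nonempty (Fin n) := by
    by_contra h
    exact hw (PiLp.ext fun i => absurd ⟨i⟩ h)
  set b := hA.eigenvectorBasis with hb
  set lam := hA.eigenvalues with hlam
  set c : Fin n → ℝ := fun l => b.repr w l with hc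
  have hAb : ∀ l, Matrix.toEuclideanLin A (b l) = lam l • b l := by
    intro l
    ext i
    have := congrFun (hA.mulVec_eigenvectorBasis l) i
    simpa [Matrix.toEuclideanLin_apply] using this
  set g : EuclideanSpace ℝ (Fin n) :=
    (WithLp.equiv 2 (Fin n → ℝ)).symm (fun l => (lam l - θ) * c l) with hg
  have hresid : Matrix.toEuclideanLin A w - θ • w = b.repr.symm g := by
    have h1 : b.repr.symm g = ∑ l, ((lam l - θ) * c l) • b l := by
      rw [← b.sum_repr_symm]
      rfl
    have h2 : Matrix.toEuclideanLin A w = ∑ l, (lam l * c l) • b l := by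
      conv_lhs => rw [← b.sum_repr w]
      rw [map_sum]
      refine Finset.sum_congr rfl fun l _ => ?_
      rw [_root_.map_smul, hAb, smul_smul, mul_comm]
    have h3 : θ • w = ∑ l, (θ * c l) • b l := by
      conv_lhs => rw [← b.sum_repr w]
      rw [Finset.smul_sum]
      refine Finset.sum_congr rfl fun l _ => ?_
      rw [smul_smul]
    rw [h1, h2, h3, ← Finset.sum_sub_distrib]
    refine (Finset.sum_congr rfl fun l _ => ?_).symm
    rw [← sub_smul, ← sub_mul]
  have hnorm_resid : ‖Matrix.toEuclideanLin A w - θ • w‖ = ‖g‖ := by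
    rw [hresid, LinearIsometryEquiv.norm_map]
  have hnorm_w : ‖w‖ = ‖b.repr w‖ := (LinearIsometryEquiv.norm_map _ _).symm
  obtain ⟨l₀, -, hl₀⟩ := Finset.exists_min_image Finset.univ (fun l => |lam l - θ|)
    Finset.univ_nonempty
  refine ⟨l₀, ?_⟩
  rw [hnorm_resid, hnorm_w]
  rw [EuclideanSpace.norm_eq, EuclideanSpace.norm_eq]
  have hgl : ∀ l, ‖g l‖ = |lam l - θ| * |c l| := by
    intro l
    rw [Real.norm_eq_abs]
    exact abs_mul _ _
  have hcl : ∀ l, ‖b.repr w l‖ = |c l| := fun l => Real.norm_eq_abs _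
  calc |lam l₀ - θ| * Real.sqrt (∑ l, ‖b.repr w l‖ ^ 2)
      = Real.sqrt (∑ l, |lam l₀ - θ| ^ 2 * ‖b.repr w l‖ ^ 2) := by
        rw [← Finset.mul_sum, Real.sqrt_mul (by positivity), Real.sqrt_sq (abs_nonneg _)]
    _ ≤ Real.sqrt (∑ l, ‖g l‖ ^ 2) := by
        apply Real.sqrt_le_sqrt
        apply Finset.sum_le_sum
        intro l _
        rw [hgl, mul_pow, hcl]
        apply mul_le_mul_of_nonneg_right _ (by positivity)
        have := hl₀ l (Finset.mem_univ l)
        exact pow_le_pow_left₀ (abs_nonneg _) this 2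

lemma blockSum {n N p : ℕ} (D : Matrix (Fin n) (Fin N × Fin p) ℝ) (x : Fin N × Fin p → ℝ) :
    D * col1 x = ∑ j : Fin N, blockCol D j * col1 (fun t => x (j, t)) := by
  ext i k
  simp [Matrix.mul_apply, col1, blockCol, Matrix.sum_apply, Fintype.sum_prod_type]

lemma normDs {n N p : ℕ} (D : Matrix (Fin n) (Fin N × Fin p) ℝ) (x : Fin N × Fin p → ℝ)
    (C : ℝ) (hC : 0 ≤ C) (hD : ∀ j, ‖blockCol D j‖ ≤ C)
    (hx : ∑ a, x a ^ 2 = 1) :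
    ‖D * col1 x‖ ≤ Real.sqrt N * C := by
  set nj : Fin N → ℝ := fun j => ‖(WithLp.equiv 2 (Fin p → ℝ)).symm (fun t => x (j, t))‖ with hnj
  have hnj2 : ∑ j, nj j ^ 2 = 1 := by
    rw [← hx, Fintype.sum_prod_type]
    refine Finset.sum_congr rfl fun j _ => ?_
    show ‖(WithLp.equiv 2 (Fin p → ℝ)).symm (fun t => x (j, t))‖ ^ 2 = _
    simp only [EuclideanSpace.norm_eq, WithLp.equiv_symm_apply, PiLp.toLp_apply, Real.norm_eq_abs, sq_abs]
    rw [Real.sq_sqrt (by positivity)]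
  have cs : ∑ j, nj j ≤ Real.sqrt N := by
    have h1 : (∑ j, nj j) ^ 2 ≤ N * ∑ j, nj j ^ 2 := by
      simpa using sq_sum_le_card_mul_sum_sq (s := Finset.univ) (f := nj)
    rw [hnj2, mul_one] at h1
    have h2 : 0 ≤ ∑ j, nj j := Finset.sum_nonneg fun j _ => norm_nonneg _
    calc ∑ j, nj j = Real.sqrt ((∑ j, nj j) ^ 2) := (Real.sqrt_sq h2).symm
      _ ≤ Real.sqrt N := Real.sqrt_le_sqrt h1
  rw [blockSum]
  calc ‖∑ j, blockCol D j * col1 (fun t => x (j, t))‖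
      ≤ ∑ j, ‖blockCol D j * col1 (fun t => x (j, t))‖ := norm_sum_le _ _
    _ ≤ ∑ j, C * nj j := by
        refine Finset.sum_le_sum fun j _ => ?_
        calc ‖blockCol D j * col1 (fun t => x (j, t))‖
            ≤ ‖blockCol D j‖ * ‖col1 (fun t => x (j, t))‖ := Matrix.l2_opNorm_mul _ _
          _ ≤ C * nj j := by
              rw [norm_col1]
              exact mul_le_mul_of_nonneg_right (hD j) (norm_nonneg _)
    _ = C * ∑ j, nj j := by rw [← Finset.mul_sum]
    _ ≤ C * Real.sqrt N := mul_le_mul_of_nonneg_left cs hC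
    _ = Real.sqrt N * C := mul_comm _ _

/-- if the perturbed block Lanczos relation `A V_N = V_N T_N + D` holds with
blockwise small perturbations `‖Δv_j‖ ≤ ε₂‖A‖`, `T_N = S Θ Sᵀ` is a spectral decomposition,
and every Ritz vector of small norm has, within `ε₁‖A‖`, a companion Ritz value whose Ritz
vector has norm at least `1/2`, then every eigenvalue of `T_N` is within
`3 max(√N ε₂, ε₁) ‖A‖` of an eigenvalue of `A`. -/
theorem stmt0 (n N p : ℕ)
    (A : Matrix (Fin n) (Fin n) ℝ) (hA : A.IsHermitian)
    (T : Matrix (Fin N × Fin p) (Fin N × Fin p) ℝ)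
    (S : Matrix (Fin N × Fin p) (Fin N × Fin p) ℝ)
    (θ : Fin N × Fin p → ℝ)
    (hS : Sᵀ * S = 1)
    (hT : T = S * Matrix.diagonal θ * Sᵀ)
    (V D : Matrix (Fin n) (Fin N × Fin p) ℝ)
    (hrel : A * V = V * T + D)
    (ε₂ : ℝ) (hε₂ : 0 < ε₂)
    (hD : ∀ j : Fin N, ‖blockCol D j‖ ≤ ε₂ * ‖A‖)
    -- the Ritz vectors
    (z : Fin N × Fin p → Matrix (Fin n) (Fin 1) ℝ)
    (hz : ∀ i, z i = V * col1 (fun a => S a i))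
    (ε₁ : ℝ) (hε₁ : 0 < ε₁)
    (hsmall : ∀ i, ‖z i‖ < 1/2 →
      ∃ j, 1/2 ≤ ‖z j‖ ∧ |θ i - θ j| ≤ ε₁ * ‖A‖) :
    ∀ i, ∃ l : Fin n,
      |hA.eigenvalues l - θ i| ≤ 3 * max (Real.sqrt N * ε₂) ε₁ * ‖A‖ := by
  intro i
  have hAnn : (0 : ℝ) ≤ ‖A‖ := norm_nonneg _
  -- find a companion index j with a large Ritz vector
  obtain ⟨j, hj1, hj2⟩ : ∃ j, 1/2 ≤ ‖z j‖ ∧ |θ i - θ j| ≤ ε₁ * ‖A‖ := by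
    by_cases h : 1/2 ≤ ‖z i‖
    · exact ⟨i, h, by simpa using mul_nonneg hε₁.le hAnn⟩
    · exact hsmall i (lt_of_not_ge h)
  set s : Fin N × Fin p → ℝ := fun a => S a j with hs
  -- T * col1 s = θ j • col1 s
  have hTS : T * S = S * Matrix.diagonal θ := by
    rw [hT, Matrix.mul_assoc, Matrix.mul_assoc, hS, Matrix.mul_one]
  have hTs : T * col1 s = θ j • col1 s := by
    ext a k
    have h1 : (T * S) a j = (S * Matrix.diagonal θ) a j := by rw [hTS]
    rw [Matrix.mul_diagonal] at h1
    simp only [Matrix.mul_apply, col1, Matrix.of_apply, Matrix.smul_apply, smul_eq_mul, s]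
    rw [show (∑ b, T a b * S b j) = (T * S) a j from rfl, h1, mul_comm]
  -- the residual identity
  have hAz : A * z j - θ j • z j = D * col1 s := by
    rw [hz j]
    calc A * (V * col1 s) - θ j • (V * col1 s)
        = (A * V) * col1 s - θ j • (V * col1 s) := by rw [Matrix.mul_assoc]
      _ = (V * T + D) * col1 s - θ j • (V * col1 s) := by rw [hrel]
      _ = V * (T * col1 s) + D * col1 s - θ j • (V * col1 s) := by
          rw [Matrix.add_mul, Matrix.mul_assoc]
      _ = D * col1 s := by
          rw [hTs, Matrix.mul_smul]
          abel
  -- norm of the residual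
  have hx : ∑ a, s a ^ 2 = 1 := by
    have h1 := congrFun (congrFun hS j) j
    simpa [Matrix.mul_apply, Matrix.one_apply, sq] using h1
  have hres_norm : ‖A * z j - θ j • z j‖ ≤ Real.sqrt N * (ε₂ * ‖A‖) := by
    rw [hAz]
    exact normDs D s (ε₂ * ‖A‖) (mul_nonneg hε₂.le hAnn) hD hx
  -- pass to Euclidean space
  set v : Fin n → ℝ := fun a => z j a 0 with hv
  set w : EuclideanSpace ℝ (Fin n) := (WithLp.equiv 2 (Fin n → ℝ)).symm v with hw
  have hzj : z j = col1 v := by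
    ext a k
    have : k = 0 := Subsingleton.elim _ _
    rw [this]
    rfl
  have hnw : ‖z j‖ = ‖w‖ := by rw [hzj, norm_col1]
  have hresid_eq : A * z j - θ j • z j = col1 (A *ᵥ v - θ j • v) := by
    ext a k
    simp [hzj, col1, Matrix.mul_apply, Matrix.mulVec, dotProduct, Matrix.sub_apply,
      Matrix.smul_apply, mul_comm]
  have hresid_norm_eq : ‖A * z j - θ j • z j‖ = ‖Matrix.toEuclideanLin A w - θ j • w‖ := by
    rw [hresid_eq, norm_col1]
    congr 1
  have hwne : w ≠ 0 := by
    intro h0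
    rw [hnw, h0, norm_zero] at hj1
    norm_num at hj1
  obtain ⟨l, hl⟩ := eig_residual hA (θ j) w hwne
  refine ⟨l, ?_⟩
  -- |λ l - θ j| ≤ 2 √N ε₂ ‖A‖
  have h2 : |hA.eigenvalues l - θ j| * (1/2) ≤ Real.sqrt N * (ε₂ * ‖A‖) := by
    calc |hA.eigenvalues l - θ j| * (1/2)
        ≤ |hA.eigenvalues l - θ j| * ‖w‖ :=
          mul_le_mul_of_nonneg_left (hnw ▸ hj1) (abs_nonneg _)
      _ ≤ ‖Matrix.toEuclideanLin A w - θ j • w‖ := hl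
      _ = ‖A * z j - θ j • z j‖ := hresid_norm_eq.symm
      _ ≤ Real.sqrt N * (ε₂ * ‖A‖) := hres_norm
  have h3 : |hA.eigenvalues l - θ j| ≤ 2 * (Real.sqrt N * (ε₂ * ‖A‖)) := by linarith
  have hmax1 : Real.sqrt N * ε₂ ≤ max (Real.sqrt N * ε₂) ε₁ := le_max_left _ _
  have hmax2 : ε₁ ≤ max (Real.sqrt N * ε₂) ε₁ := le_max_right _ _
  calc |hA.eigenvalues l - θ i|
      ≤ |hA.eigenvalues l - θ j| + |θ i - θ j| := by
        rw [abs_sub_comm (θ i) (θ j)]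
        exact abs_sub_le _ _ _
    _ ≤ 2 * (Real.sqrt N * (ε₂ * ‖A‖)) + ε₁ * ‖A‖ := add_le_add h3 hj2
    _ = 2 * (Real.sqrt N * ε₂) * ‖A‖ + ε₁ * ‖A‖ := by ring
    _ ≤ 2 * max (Real.sqrt N * ε₂) ε₁ * ‖A‖ + max (Real.sqrt N * ε₂) ε₁ * ‖A‖ := by
        have := mul_le_mul_of_nonneg_right hmax1 hAnn
        have := mul_le_mul_of_nonneg_right hmax2 hAnn
        nlinarith
    _ = 3 * max (Real.sqrt N * ε₂) ε₁ * ‖A‖ := by ring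
end
end

section
/- Let $T_{k+1} \in \mathbb{R}^{(k+1)p\times(k+1)p}$ be symmetric block tridiagonal with diagonal blocks $\alpha_1,\dots,\alpha_{k+1} \in \mathbb{R}^{p\times p}$ and subdiagonal blocks $\beta_2,\dots,\beta_{k+1} \in \mathbb{R}^{p\times p}$, and assume each $\beta_{j+1}$, $j = 1,\dots,k$, is nonsingular. Let $T_k$ denote its leading $kp \times kp$ principal submatrix, and let $\theta_1^{(k)} \le \dots \le \theta_{kp}^{(k)}$ and $\theta_1^{(k+1)} \le \dots \le \theta_{(k+1)p}^{(k+1)}$ denote the eigenvalues of $T_k$ and $T_{k+1}$, respectively, sorted increasingly. Then $\theta_i^{(k)} < \theta_{i+p}^{(k+1)} < \theta_{i+p}^{(k)}$ for $i = 1,\dots,(k-1)p$, and moreover $\theta_1^{(k+1)} < \theta_1^{(k)}$ and $\theta_{kp}^{(k)} < \theta_{(k+1)p}^{(k+1)}$. -/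
open Matrix
open scoped Matrix.Norms.L2Operator

noncomputable section

/-- The symmetric block tridiagonal matrix of block size `p` with `N` block rows,
with diagonal blocks `α 0, …, α (N-1)` and subdiagonal blocks `β 1, …, β (N-1)`
(`β j` sits in block row `j`, block column `j-1`; `β jᵀ` in the superdiagonal). -/
def blockTridiag (p N : ℕ) (α β : ℕ → Matrix (Fin p) (Fin p) ℝ) :
    Matrix (Fin N × Fin p) (Fin N × Fin p) ℝ :=
  Matrix.of fun x y =>
    if x.1.val = y.1.val then α x.1.val x.2 y.2
    else if x.1.val = y.1.val + 1 then β x.1.val x.2 y.2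
    else if y.1.val = x.1.val + 1 then β y.1.val y.2 x.2
    else 0

open Submodule Finset
open scoped RealInnerProductSpace

set_option linter.unusedSectionVars false

variable {ι : Type*} [Fintype ι] [DecidableEq ι]
  {E : Type*} [NormedAddCommGroup E] [InnerProductSpace ℝ E]
  (b : OrthonormalBasis ι ℝ E) (T : E →ₗ[ℝ] E) (μ : ι → ℝ)

lemma inner_self_eq_sum (x : E) : ⟪x, x⟫ = ∑ i, (⟪b i, x⟫)^2 := by
  nth_rewrite 1 [← b.sum_repr x]
  rw [sum_inner]
  congr 1; ext i
  rw [real_inner_smul_left, b.repr_apply_apply, real_inner_comm x (b i), sq]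

lemma inner_T_eq_sum (hsym : ∀ x y, ⟪T x, y⟫ = ⟪x, T y⟫)
    (heig : ∀ i, T (b i) = μ i • b i) (x : E) :
    ⟪T x, x⟫ = ∑ i, μ i * (⟪b i, x⟫)^2 := by
  have h1 : ∀ i, ⟪T x, b i⟫ = μ i * ⟪b i, x⟫ := by
    intro i
    rw [hsym, heig, real_inner_smul_right, real_inner_comm]
  nth_rewrite 2 [← b.sum_repr x]
  rw [inner_sum]
  congr 1; ext i
  rw [real_inner_smul_right, h1, b.repr_apply_apply]
  ring

lemma inner_basis_eq_zero_of_mem_span (S : Finset ι) {x : E}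
    (hx : x ∈ span ℝ (b '' ↑S)) {i : ι} (hi : i ∉ S) : ⟪b i, x⟫ = 0 := by
  have hle : span ℝ (b '' ↑S) ≤ LinearMap.ker (innerSL ℝ (b i)).toLinearMap := by
    rw [span_le]
    rintro _ ⟨j, hj, rfl⟩
    simp only [SetLike.mem_coe, LinearMap.mem_ker, ContinuousLinearMap.coe_coe, innerSL_apply_apply]
    exact b.orthonormal.2 (fun h => hi (h ▸ hj))
  simpa using hle hx

lemma finrank_span_basis_image (S : Finset ι) :
    Module.finrank ℝ (span ℝ (b '' ↑S)) = S.card := by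
  have hli : LinearIndependent ℝ (fun i : ↥(↑S : Set ι) => b i) :=
    b.orthonormal.linearIndependent.comp Subtype.val Subtype.val_injective
  have h : Set.range (fun i : ↥(↑S : Set ι) => b i) = b '' ↑S := (Set.image_eq_range _ _).symm
  rw [← h, finrank_span_eq_card hli]
  simp

lemma rayleigh_le_of_mem_span (hsym : ∀ x y, ⟪T x, y⟫ = ⟪x, T y⟫)
    (heig : ∀ i, T (b i) = μ i • b i) (S : Finset ι) {c : ℝ}
    (hc : ∀ i ∈ S, μ i ≤ c) {x : E} (hx : x ∈ span ℝ (b '' ↑S)) :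
    ⟪T x, x⟫ ≤ c * ⟪x, x⟫ := by
  rw [inner_T_eq_sum b T μ hsym heig, inner_self_eq_sum b, Finset.mul_sum]
  apply Finset.sum_le_sum
  intro i _
  by_cases hi : i ∈ S
  · exact mul_le_mul_of_nonneg_right (hc i hi) (sq_nonneg _)
  · rw [inner_basis_eq_zero_of_mem_span b S hx hi]
    simp

lemma rayleigh_ge_of_mem_span (hsym : ∀ x y, ⟪T x, y⟫ = ⟪x, T y⟫)
    (heig : ∀ i, T (b i) = μ i • b i) (S : Finset ι) {c : ℝ}
    (hc : ∀ i ∈ S, c ≤ μ i) {x : E} (hx : x ∈ span ℝ (b '' ↑S)) :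
    c * ⟪x, x⟫ ≤ ⟪T x, x⟫ := by
  rw [inner_T_eq_sum b T μ hsym heig, inner_self_eq_sum b, Finset.mul_sum]
  apply Finset.sum_le_sum
  intro i _
  by_cases hi : i ∈ S
  · exact mul_le_mul_of_nonneg_right (hc i hi) (sq_nonneg _)
  · rw [inner_basis_eq_zero_of_mem_span b S hx hi]
    simp

lemma eig_of_rayleigh_le_eq (hsym : ∀ x y, ⟪T x, y⟫ = ⟪x, T y⟫)
    (heig : ∀ i, T (b i) = μ i • b i) (S : Finset ι) {c : ℝ}
    (hc : ∀ i ∈ S, μ i ≤ c) {x : E} (hx : x ∈ span ℝ (b '' ↑S))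
    (heq : ⟪T x, x⟫ = c * ⟪x, x⟫) : T x = c • x := by
  -- each coordinate satisfies (c - μ i) * ⟪b i, x⟫^2 = 0
  have hz : ∀ i, (c - μ i) * (⟪b i, x⟫)^2 = 0 := by
    have hsum : ∑ i, (c - μ i) * (⟪b i, x⟫)^2 = 0 := by
      have h1 : ∑ i, (c - μ i) * (⟪b i, x⟫)^2 = c * ⟪x, x⟫ - ⟪T x, x⟫ := by
        rw [inner_T_eq_sum b T μ hsym heig, inner_self_eq_sum b, Finset.mul_sum,
          ← Finset.sum_sub_distrib]
        exact Finset.sum_congr rfl fun i _ => by ring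
      rw [h1, heq, sub_self]
    intro i
    have hnn : ∀ i ∈ Finset.univ (α := ι), 0 ≤ (c - μ i) * (⟪b i, x⟫)^2 := by
      intro i _
      by_cases hi : i ∈ S
      · exact mul_nonneg (sub_nonneg.2 (hc i hi)) (sq_nonneg _)
      · rw [inner_basis_eq_zero_of_mem_span b S hx hi]; simp
    exact (Finset.sum_eq_zero_iff_of_nonneg hnn).1 hsum i (Finset.mem_univ i)
  -- hence μ i * ⟪b i, x⟫ = c * ⟪b i, x⟫ for all i
  have hco : ∀ i, μ i * ⟪b i, x⟫ = c * ⟪b i, x⟫ := by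
    intro i
    rcases mul_eq_zero.1 (hz i) with h | h
    · have : μ i = c := by linarith [sub_eq_zero.1 h]
      rw [this]
    · rw [pow_eq_zero_iff (two_ne_zero)] at h
      rw [h, mul_zero, mul_zero]
  -- conclude via repr
  apply b.repr.injective
  ext i
  rw [_root_.map_smul]
  simp only [PiLp.smul_apply, smul_eq_mul]
  rw [b.repr_apply_apply, b.repr_apply_apply, ← hsym, heig, real_inner_smul_left, hco i]

lemma eig_of_rayleigh_ge_eq (hsym : ∀ x y, ⟪T x, y⟫ = ⟪x, T y⟫)
    (heig : ∀ i, T (b i) = μ i • b i) (S : Finset ι) {c : ℝ}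
    (hc : ∀ i ∈ S, c ≤ μ i) {x : E} (hx : x ∈ span ℝ (b '' ↑S))
    (heq : ⟪T x, x⟫ = c * ⟪x, x⟫) : T x = c • x := by
  have hsym' : ∀ x y, ⟪(-T) x, y⟫ = ⟪x, (-T) y⟫ := by
    intro x y
    simp only [LinearMap.neg_apply, inner_neg_left, inner_neg_right, hsym]
  have heig' : ∀ i, (-T) (b i) = (-μ) i • b i := by
    intro i
    simp only [LinearMap.neg_apply, heig, Pi.neg_apply, neg_smul]
  have hc' : ∀ i ∈ S, (-μ) i ≤ -c := fun i hi => neg_le_neg (hc i hi)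
  have heq' : ⟪(-T) x, x⟫ = (-c) * ⟪x, x⟫ := by
    simp only [LinearMap.neg_apply, inner_neg_left, heq]; ring
  have := eig_of_rayleigh_le_eq b (-T) (-μ) hsym' heig' S hc' hx heq'
  simp only [LinearMap.neg_apply, neg_smul] at this
  have := neg_injective this
  rw [this]

/-! ### mulVec as a linear map on EuclideanSpace -/

def mulVecE {n : Type*} [Fintype n] (A : Matrix n n ℝ) :
    EuclideanSpace ℝ n →ₗ[ℝ] EuclideanSpace ℝ n where
  toFun := fun x => WithLp.toLp 2 (A *ᵥ x)
  map_add' := fun x y => by simp [A.mulVec_add]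
  map_smul' := fun c x => by simp [A.mulVec_smul]

lemma mulVecE_apply {n : Type*} [Fintype n] (A : Matrix n n ℝ) (x : EuclideanSpace ℝ n) :
    mulVecE A x = A *ᵥ x := rfl

lemma mulVecE_symm {n : Type*} [Fintype n] {A : Matrix n n ℝ} (hA : A.IsHermitian)
    (x y : EuclideanSpace ℝ n) : ⟪mulVecE A x, y⟫ = ⟪x, mulVecE A y⟫ := by
  have hAe : ∀ i j, A j i = A i j := fun i j => by
    have := congrFun (congrFun hA i) j
    simpa [Matrix.conjTranspose_apply] using this
  simp only [mulVecE_apply, PiLp.inner_apply, RCLike.inner_apply, starRingEnd_apply, star_trivial,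
    Matrix.mulVec, dotProduct]
  have l : ∀ (i : n), (∑ j, A i j * x j) * y i = ∑ j, A i j * x j * y i :=
    fun i => Finset.sum_mul _ _ _
  have r : ∀ (i : n), x i * ∑ j, A i j * y j = ∑ j, x i * (A i j * y j) :=
    fun i => Finset.mul_sum _ _ _
  simp only [Finset.mul_sum, Finset.sum_mul]
  rw [Finset.sum_comm]
  exact Finset.sum_congr rfl fun i _ => Finset.sum_congr rfl fun j _ => by rw [hAe i j]; ring

lemma mulVecE_eigenvectorBasis {n : Type*} [Fintype n] [DecidableEq n] {A : Matrix n n ℝ}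
    (hA : A.IsHermitian) (i : n) :
    mulVecE A (hA.eigenvectorBasis i) = hA.eigenvalues i • hA.eigenvectorBasis i :=
  by apply WithLp.ofLp_injective 2; exact hA.mulVec_eigenvectorBasis i

/-! ### Embedding of the smaller space -/

variable {p k : ℕ}

def iotaL (k p : ℕ) :
    EuclideanSpace ℝ (Fin k × Fin p) →ₗ[ℝ] EuclideanSpace ℝ (Fin (k+1) × Fin p) where
  toFun := fun v => WithLp.toLp 2 (fun x => if h : (x.1 : ℕ) < k then v (⟨x.1, h⟩, x.2) else 0)
  map_add' := fun v w => by
    ext x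
    by_cases h : (x.1 : ℕ) < k <;> simp [h]
  map_smul' := fun c v => by
    ext x
    by_cases h : (x.1 : ℕ) < k <;> simp [h]

lemma iotaL_apply_castSucc (v : EuclideanSpace ℝ (Fin k × Fin p)) (a : Fin k) (s : Fin p) :
    iotaL k p v (a.castSucc, s) = v (a, s) := by
  simp [iotaL, a.isLt]

lemma iotaL_apply_last (v : EuclideanSpace ℝ (Fin k × Fin p)) (s : Fin p) :
    iotaL k p v (Fin.last k, s) = 0 := by
  simp [iotaL]

lemma iotaL_injective : Function.Injective (iotaL k p) := by
  intro v w h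
  ext a
  have := congrFun (congrArg WithLp.ofLp h) (a.1.castSucc, a.2)
  rwa [iotaL_apply_castSucc, iotaL_apply_castSucc] at this

lemma iotaL_inner (v w : EuclideanSpace ℝ (Fin k × Fin p)) :
    ⟪iotaL k p v, iotaL k p w⟫ = ⟪v, w⟫ := by
  simp only [PiLp.inner_apply, RCLike.inner_apply, starRingEnd_apply, star_trivial]
  rw [Fintype.sum_prod_type, Fin.sum_univ_castSucc, Fintype.sum_prod_type]
  simp [iotaL_apply_castSucc, iotaL_apply_last]

lemma blockTridiag_castSucc (α β : ℕ → Matrix (Fin p) (Fin p) ℝ) (a b : Fin k × Fin p) :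
    blockTridiag p (k+1) α β (a.1.castSucc, a.2) (b.1.castSucc, b.2) =
      blockTridiag p k α β a b := rfl

lemma mulVec_iotaL (α β : ℕ → Matrix (Fin p) (Fin p) ℝ)
    (v : EuclideanSpace ℝ (Fin k × Fin p)) (a : Fin k) (s : Fin p) :
    (blockTridiag p (k+1) α β *ᵥ iotaL k p v) (a.castSucc, s) =
      (blockTridiag p k α β *ᵥ v) (a, s) := by
  simp only [Matrix.mulVec, dotProduct]
  rw [Fintype.sum_prod_type, Fin.sum_univ_castSucc, Fintype.sum_prod_type]
  have hlast : ∀ s' : Fin p,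
      blockTridiag p (k+1) α β (a.castSucc, s) (Fin.last k, s') *
        iotaL k p v (Fin.last k, s') = 0 := by
    intro s'; rw [iotaL_apply_last, mul_zero]
  simp only [hlast, Finset.sum_const_zero, add_zero]
  exact Finset.sum_congr rfl fun b _ => Finset.sum_congr rfl fun s' _ => by
    rw [iotaL_apply_castSucc, blockTridiag_castSucc α β (a, s) (b, s')]

lemma iotaL_inner_mulVec (α β : ℕ → Matrix (Fin p) (Fin p) ℝ)
    (v w : EuclideanSpace ℝ (Fin k × Fin p)) :
    ⟪mulVecE (blockTridiag p (k+1) α β) (iotaL k p v), iotaL k p w⟫ =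
      ⟪mulVecE (blockTridiag p k α β) v, w⟫ := by
  simp only [mulVecE_apply, PiLp.inner_apply, RCLike.inner_apply, starRingEnd_apply, star_trivial]
  rw [Fintype.sum_prod_type, Fin.sum_univ_castSucc, Fintype.sum_prod_type]
  have hlast : ∀ s' : Fin p,
      iotaL k p w (Fin.last k, s') *
        (blockTridiag p (k+1) α β *ᵥ iotaL k p v) (Fin.last k, s') = 0 := by
    intro s'; rw [iotaL_apply_last, zero_mul]
  simp only [hlast, Finset.sum_const_zero, add_zero]
  exact Finset.sum_congr rfl fun b _ => Finset.sum_congr rfl fun s' _ => by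
    rw [iotaL_apply_castSucc, mulVec_iotaL]

/-! ### Zero propagation for eigenvectors whose last block vanishes -/

lemma blockTridiag_apply' (N : ℕ) (α β : ℕ → Matrix (Fin p) (Fin p) ℝ) (a b : Fin N × Fin p) :
    blockTridiag p N α β a b =
      if (a.1 : ℕ) = (b.1 : ℕ) then α (a.1 : ℕ) a.2 b.2
      else if (a.1 : ℕ) = (b.1 : ℕ) + 1 then β (a.1 : ℕ) a.2 b.2
      else if (b.1 : ℕ) = (a.1 : ℕ) + 1 then β (b.1 : ℕ) b.2 a.2
      else 0 := rfl

lemma blockTridiag_eigvec_zero (α β : ℕ → Matrix (Fin p) (Fin p) ℝ)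
    (hβ : ∀ j, 1 ≤ j → j ≤ k → IsUnit (β j)) {lam : ℝ}
    {x : Fin (k+1) × Fin p → ℝ}
    (hx : blockTridiag p (k+1) α β *ᵥ x = lam • x)
    (hlast : ∀ s, x (Fin.last k, s) = 0) : x = 0 := by
  have Q : ∀ t : ℕ, ∀ j : Fin (k+1), k ≤ (j : ℕ) + t → ∀ s, x (j, s) = 0 := by
    intro t
    induction t with
    | zero =>
      intro j hj s
      have : j = Fin.last k := by
        apply Fin.ext
        have := j.isLt
        simp only [Fin.val_last]
        omega
      rw [this]; exact hlast s
    | succ t ih =>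
      intro j hj s
      by_cases hk : k ≤ (j : ℕ) + t
      · exact ih j hk s
      push_neg at hk
      have hjv : (j : ℕ) + t + 1 = k := by omega
      have hrlt : (j : ℕ) + 1 < k + 1 := by omega
      have hrow : ∀ s' : Fin p,
          (blockTridiag p (k+1) α β *ᵥ x) (⟨(j : ℕ) + 1, hrlt⟩, s') = 0 := by
        intro s'
        rw [hx]
        have hxr : x (⟨(j : ℕ) + 1, hrlt⟩, s') = 0 :=
          ih ⟨(j : ℕ) + 1, hrlt⟩ ((by omega : k ≤ (j : ℕ) + 1 + t)) s'
        show lam * x (⟨(j : ℕ) + 1, hrlt⟩, s') = 0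
        rw [hxr, mul_zero]
      have hcomp : ∀ s' : Fin p,
          (blockTridiag p (k+1) α β *ᵥ x) (⟨(j : ℕ) + 1, hrlt⟩, s') =
            ∑ y2, β ((j : ℕ) + 1) s' y2 * x (j, y2) := by
        intro s'
        show ∑ y : Fin (k+1) × Fin p,
            blockTridiag p (k+1) α β (⟨(j : ℕ) + 1, hrlt⟩, s') y * x y = _
        rw [Fintype.sum_prod_type]
        rw [Finset.sum_eq_single j]
        · apply Finset.sum_congr rfl
          intro y2 _
          congr 1
          rw [blockTridiag_apply']
          rw [if_neg ((by omega : ¬((j : ℕ) + 1 = (j : ℕ)))),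
            if_pos ((rfl : ((j : ℕ) + 1 = (j : ℕ) + 1)))]
        · intro y1 _ hy1
          have hy1v : (y1 : ℕ) ≠ (j : ℕ) := fun h => hy1 (Fin.ext h)
          apply Finset.sum_eq_zero
          intro y2 _
          by_cases h1 : (y1 : ℕ) = (j : ℕ) + 1
          · have hx0 : x (y1, y2) = 0 := ih y1 (by omega) y2
            rw [hx0, mul_zero]
          · by_cases h2 : (y1 : ℕ) = (j : ℕ) + 2
            · have hx0 : x (y1, y2) = 0 := ih y1 (by omega) y2
              rw [hx0, mul_zero]
            · have hz : blockTridiag p (k+1) α β (⟨(j : ℕ) + 1, hrlt⟩, s') (y1, y2) = 0 := by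
                rw [blockTridiag_apply']
                rw [if_neg ((by omega : ¬((j : ℕ) + 1 = (y1 : ℕ)))),
                  if_neg ((by omega : ¬((j : ℕ) + 1 = (y1 : ℕ) + 1))),
                  if_neg ((by omega : ¬((y1 : ℕ) = (j : ℕ) + 1 + 1)))]
              rw [hz, zero_mul]
        · intro h
          exact absurd (Finset.mem_univ j) h
      have hvec : β ((j : ℕ) + 1) *ᵥ (fun y2 => x (j, y2)) = 0 := by
        funext s'
        show ∑ y2, β ((j : ℕ) + 1) s' y2 * x (j, y2) = 0
        rw [← hcomp s']
        exact hrow s'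
      have hu := hβ ((j : ℕ) + 1) (by omega) (by omega)
      have hdet : IsUnit (β ((j : ℕ) + 1)).det := (Matrix.isUnit_iff_isUnit_det _).1 hu
      have hzero : (fun y2 => x (j, y2)) = 0 := by
        have h1 : (β ((j : ℕ) + 1))⁻¹ *ᵥ (β ((j : ℕ) + 1) *ᵥ (fun y2 => x (j, y2))) =
            (fun y2 => x (j, y2)) := by
          rw [Matrix.mulVec_mulVec, Matrix.nonsing_inv_mul _ hdet, Matrix.one_mulVec]
        rw [hvec, Matrix.mulVec_zero] at h1
        exact h1.symm
      have := congrFun hzero s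
      simpa using this
  funext a
  obtain ⟨j, s⟩ := a
  have := Q k j (by omega) s
  simpa using this

/-! ### The core interlacing claims -/

lemma interlace_core (p k : ℕ)
    (α β : ℕ → Matrix (Fin p) (Fin p) ℝ)
    (hβ : ∀ j, 1 ≤ j → j ≤ k → IsUnit (β j))
    (hT1 : (blockTridiag p (k+1) α β).IsHermitian)
    (hTk : (blockTridiag p k α β).IsHermitian)
    (θk : Fin (k * p) → ℝ) (θk1 : Fin ((k+1) * p) → ℝ)
    (hθk : Monotone θk) (hθk1 : Monotone θk1)
    (hθke : ∃ e : Fin (k * p) ≃ Fin k × Fin p, θk = hTk.eigenvalues ∘ e)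
    (hθk1e : ∃ e : Fin ((k+1) * p) ≃ Fin (k+1) × Fin p, θk1 = hT1.eigenvalues ∘ e) :
    (∀ (j : Fin (k * p)) (j' : Fin ((k+1) * p)),
        (j' : ℕ) = (j : ℕ) → θk1 j' < θk j) ∧
    (∀ (j : Fin (k * p)) (j' : Fin ((k+1) * p)),
        (j' : ℕ) = (j : ℕ) + p → θk j < θk1 j') := by
  classical
  obtain ⟨eB, hEB⟩ := hθke
  obtain ⟨eA, hEA⟩ := hθk1e
  set A := blockTridiag p (k+1) α β with hAdef
  set B := blockTridiag p k α β with hBdef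
  set bA := hT1.eigenvectorBasis.reindex eA.symm with hbAdef
  set bB := hTk.eigenvectorBasis.reindex eB.symm with hbBdef
  have hbA : ∀ i, bA i = hT1.eigenvectorBasis (eA i) := by
    intro i; rw [hbAdef, OrthonormalBasis.reindex_apply, Equiv.symm_symm]
  have hbB : ∀ i, bB i = hTk.eigenvectorBasis (eB i) := by
    intro i; rw [hbBdef, OrthonormalBasis.reindex_apply, Equiv.symm_symm]
  have heigA : ∀ i, mulVecE A (bA i) = θk1 i • bA i := by
    intro i
    rw [hbA i, hEA]
    exact mulVecE_eigenvectorBasis hT1 (eA i)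
  have heigB : ∀ i, mulVecE B (bB i) = θk i • bB i := by
    intro i
    rw [hbB i, hEB]
    exact mulVecE_eigenvectorBasis hTk (eB i)
  have hsymA : ∀ x y, ⟪mulVecE A x, y⟫ = ⟪x, mulVecE A y⟫ := mulVecE_symm hT1
  have hsymB : ∀ x y, ⟪mulVecE B x, y⟫ = ⟪x, mulVecE B y⟫ := mulVecE_symm hTk
  have hexp : (k+1)*p = k*p + p := by ring
  have hspace : Module.finrank ℝ (EuclideanSpace ℝ (Fin (k+1) × Fin p)) = (k+1)*p := by
    simp [finrank_euclideanSpace]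
  constructor
  · -- θk1 j' < θk j  when (j' : ℕ) = (j : ℕ)
    intro j j' hjj'
    set V' := (span ℝ (bB '' ↑(Finset.Iic j))).map (iotaL k p) with hV'def
    set U := span ℝ (bA '' ↑(Finset.Ici j')) with hUdef
    have hfV' : Module.finrank ℝ V' = (j : ℕ) + 1 := by
      rw [hV'def,
        ← LinearEquiv.finrank_eq (Submodule.equivMapOfInjective _ iotaL_injective _),
        finrank_span_basis_image, Fin.card_Iic]
    have hfU : Module.finrank ℝ U = (k+1)*p - (j' : ℕ) := by
      rw [hUdef, finrank_span_basis_image, Fin.card_Ici]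
    have hsum := Submodule.finrank_sup_add_finrank_inf_eq V' U
    have hle2 : Module.finrank ℝ ↥(V' ⊔ U) ≤ (k+1)*p := hspace ▸ Submodule.finrank_le _
    have hjlt := j.isLt
    have hpos : 0 < Module.finrank ℝ ↥(V' ⊓ U) := by omega
    have : Nontrivial ↥(V' ⊓ U) := Module.finrank_pos_iff.1 hpos
    obtain ⟨x0, hx0ne⟩ := exists_ne (0 : ↥(V' ⊓ U))
    have hxne : (x0 : EuclideanSpace ℝ (Fin (k+1) × Fin p)) ≠ 0 :=
      fun h => hx0ne (Subtype.ext h)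
    have hxV' : (x0 : EuclideanSpace ℝ (Fin (k+1) × Fin p)) ∈ V' := x0.2.1
    have hxU : (x0 : EuclideanSpace ℝ (Fin (k+1) × Fin p)) ∈ U := x0.2.2
    obtain ⟨v, hvmem, hvx⟩ := Submodule.mem_map.1 hxV'
    have hvne : v ≠ 0 := by
      rintro rfl
      apply hxne
      rw [← hvx, map_zero]
    have hvv : (0:ℝ) < ⟪v, v⟫ := lt_of_le_of_ne real_inner_self_nonneg
      (fun h => hvne (inner_self_eq_zero.1 h.symm))
    have hxx : ⟪(x0 : EuclideanSpace ℝ (Fin (k+1) × Fin p)),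
        (x0 : EuclideanSpace ℝ (Fin (k+1) × Fin p))⟫ = ⟪v, v⟫ := by
      rw [← hvx]; exact iotaL_inner v v
    have hAB : ⟪mulVecE A (x0 : EuclideanSpace ℝ (Fin (k+1) × Fin p)),
        (x0 : EuclideanSpace ℝ (Fin (k+1) × Fin p))⟫ = ⟪mulVecE B v, v⟫ := by
      rw [← hvx]; exact iotaL_inner_mulVec α β v v
    have hge : θk1 j' * ⟪(x0 : EuclideanSpace ℝ (Fin (k+1) × Fin p)),
        (x0 : EuclideanSpace ℝ (Fin (k+1) × Fin p))⟫ ≤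
        ⟪mulVecE A (x0 : EuclideanSpace ℝ (Fin (k+1) × Fin p)),
          (x0 : EuclideanSpace ℝ (Fin (k+1) × Fin p))⟫ :=
      rayleigh_ge_of_mem_span bA _ θk1 hsymA heigA (Finset.Ici j')
        (fun i hi => hθk1 (Finset.mem_Ici.1 hi)) hxU
    have hle : ⟪mulVecE B v, v⟫ ≤ θk j * ⟪v, v⟫ :=
      rayleigh_le_of_mem_span bB _ θk hsymB heigB (Finset.Iic j)
        (fun i hi => hθk (Finset.mem_Iic.1 hi)) hvmem
    have hlsle : θk1 j' ≤ θk j := by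
      have h1 : θk1 j' * ⟪v, v⟫ ≤ θk j * ⟪v, v⟫ := by
        rw [← hxx]
        exact le_trans hge (by rw [hAB, hxx]; exact hle)
      exact (mul_le_mul_iff_of_pos_right hvv).1 h1
    by_contra hcon
    push_neg at hcon
    have heqc : θk1 j' = θk j := le_antisymm hlsle (le_of_not_gt (by exact fun h => absurd hcon (not_le.2 h)))
    have hAeq : ⟪mulVecE A (x0 : EuclideanSpace ℝ (Fin (k+1) × Fin p)),
        (x0 : EuclideanSpace ℝ (Fin (k+1) × Fin p))⟫ =
        θk1 j' * ⟪(x0 : EuclideanSpace ℝ (Fin (k+1) × Fin p)),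
          (x0 : EuclideanSpace ℝ (Fin (k+1) × Fin p))⟫ := by
      refine le_antisymm ?_ hge
      rw [hAB, hxx, heqc]
      exact hle
    have heigx : mulVecE A (x0 : EuclideanSpace ℝ (Fin (k+1) × Fin p)) =
        θk1 j' • (x0 : EuclideanSpace ℝ (Fin (k+1) × Fin p)) :=
      eig_of_rayleigh_ge_eq bA _ θk1 hsymA heigA (Finset.Ici j')
        (fun i hi => hθk1 (Finset.mem_Ici.1 hi)) hxU hAeq
    have hlast : ∀ s, (x0 : EuclideanSpace ℝ (Fin (k+1) × Fin p)) (Fin.last k, s) = 0 := by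
      intro s
      rw [← hvx]
      exact iotaL_apply_last v s
    have hxzero := blockTridiag_eigvec_zero α β hβ (lam := θk1 j') (congrArg WithLp.ofLp heigx) hlast
    exact hxne ((WithLp.ofLp_eq_zero 2).1 hxzero)
  · -- θk j < θk1 j'  when (j' : ℕ) = (j : ℕ) + p
    intro j j' hjj'
    set W' := (span ℝ (bB '' ↑(Finset.Ici j))).map (iotaL k p) with hW'def
    set U := span ℝ (bA '' ↑(Finset.Iic j')) with hUdef
    have hfW' : Module.finrank ℝ W' = k*p - (j : ℕ) := by
      rw [hW'def,
        ← LinearEquiv.finrank_eq (Submodule.equivMapOfInjective _ iotaL_injective _),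
        finrank_span_basis_image, Fin.card_Ici]
    have hfU : Module.finrank ℝ U = (j' : ℕ) + 1 := by
      rw [hUdef, finrank_span_basis_image, Fin.card_Iic]
    have hsum := Submodule.finrank_sup_add_finrank_inf_eq W' U
    have hle2 : Module.finrank ℝ ↥(W' ⊔ U) ≤ (k+1)*p := hspace ▸ Submodule.finrank_le _
    have hjlt := j.isLt
    have hpos : 0 < Module.finrank ℝ ↥(W' ⊓ U) := by omega
    have : Nontrivial ↥(W' ⊓ U) := Module.finrank_pos_iff.1 hpos
    obtain ⟨x0, hx0ne⟩ := exists_ne (0 : ↥(W' ⊓ U))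
    have hxne : (x0 : EuclideanSpace ℝ (Fin (k+1) × Fin p)) ≠ 0 :=
      fun h => hx0ne (Subtype.ext h)
    have hxW' : (x0 : EuclideanSpace ℝ (Fin (k+1) × Fin p)) ∈ W' := x0.2.1
    have hxU : (x0 : EuclideanSpace ℝ (Fin (k+1) × Fin p)) ∈ U := x0.2.2
    obtain ⟨v, hvmem, hvx⟩ := Submodule.mem_map.1 hxW'
    have hvne : v ≠ 0 := by
      rintro rfl
      apply hxne
      rw [← hvx, map_zero]
    have hvv : (0:ℝ) < ⟪v, v⟫ := lt_of_le_of_ne real_inner_self_nonneg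
      (fun h => hvne (inner_self_eq_zero.1 h.symm))
    have hxx : ⟪(x0 : EuclideanSpace ℝ (Fin (k+1) × Fin p)),
        (x0 : EuclideanSpace ℝ (Fin (k+1) × Fin p))⟫ = ⟪v, v⟫ := by
      rw [← hvx]; exact iotaL_inner v v
    have hAB : ⟪mulVecE A (x0 : EuclideanSpace ℝ (Fin (k+1) × Fin p)),
        (x0 : EuclideanSpace ℝ (Fin (k+1) × Fin p))⟫ = ⟪mulVecE B v, v⟫ := by
      rw [← hvx]; exact iotaL_inner_mulVec α β v v
    have hge : θk j * ⟪v, v⟫ ≤ ⟪mulVecE B v, v⟫ :=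
      rayleigh_ge_of_mem_span bB _ θk hsymB heigB (Finset.Ici j)
        (fun i hi => hθk (Finset.mem_Ici.1 hi)) hvmem
    have hle : ⟪mulVecE A (x0 : EuclideanSpace ℝ (Fin (k+1) × Fin p)),
        (x0 : EuclideanSpace ℝ (Fin (k+1) × Fin p))⟫ ≤
        θk1 j' * ⟪(x0 : EuclideanSpace ℝ (Fin (k+1) × Fin p)),
          (x0 : EuclideanSpace ℝ (Fin (k+1) × Fin p))⟫ :=
      rayleigh_le_of_mem_span bA _ θk1 hsymA heigA (Finset.Iic j')
        (fun i hi => hθk1 (Finset.mem_Iic.1 hi)) hxU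
    have hlsle : θk j ≤ θk1 j' := by
      have h1 : θk j * ⟪v, v⟫ ≤ θk1 j' * ⟪v, v⟫ := by
        refine le_trans hge ?_
        rw [← hAB, ← hxx] at *
        exact le_trans hle (by rw [hxx])
      exact (mul_le_mul_iff_of_pos_right hvv).1 h1
    by_contra hcon
    push_neg at hcon
    have heqc : θk1 j' = θk j := le_antisymm hcon hlsle
    have hAeq : ⟪mulVecE A (x0 : EuclideanSpace ℝ (Fin (k+1) × Fin p)),
        (x0 : EuclideanSpace ℝ (Fin (k+1) × Fin p))⟫ =
        θk1 j' * ⟪(x0 : EuclideanSpace ℝ (Fin (k+1) × Fin p)),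
          (x0 : EuclideanSpace ℝ (Fin (k+1) × Fin p))⟫ := by
      refine le_antisymm hle ?_
      rw [hAB, hxx, heqc]
      exact hge
    have heigx : mulVecE A (x0 : EuclideanSpace ℝ (Fin (k+1) × Fin p)) =
        θk1 j' • (x0 : EuclideanSpace ℝ (Fin (k+1) × Fin p)) :=
      eig_of_rayleigh_le_eq bA _ θk1 hsymA heigA (Finset.Iic j')
        (fun i hi => hθk1 (Finset.mem_Iic.1 hi)) hxU hAeq
    have hlast : ∀ s, (x0 : EuclideanSpace ℝ (Fin (k+1) × Fin p)) (Fin.last k, s) = 0 := by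
      intro s
      rw [← hvx]
      exact iotaL_apply_last v s
    have hxzero := blockTridiag_eigvec_zero α β hβ (lam := θk1 j') (congrArg WithLp.ofLp heigx) hlast
    exact hxne ((WithLp.ofLp_eq_zero 2).1 hxzero)

/-- interlacing of the sorted eigenvalues of a symmetric block tridiagonal
matrix `T_{k+1}` (with nonsingular subdiagonal blocks) and of its leading `kp × kp`
principal submatrix `T_k`:
`θ_i^{(k)} < θ_{i+p}^{(k+1)} < θ_{i+p}^{(k)}` for `i = 1, …, (k-1)p` (here written with
0-based indices `i`, `i+p` constrained through their values), together with
`θ_1^{(k+1)} < θ_1^{(k)}` and `θ_{kp}^{(k)} < θ_{(k+1)p}^{(k+1)}`. -/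
theorem stmt4 (p k : ℕ)
    (α β : ℕ → Matrix (Fin p) (Fin p) ℝ)
    (hα : ∀ j, (α j)ᵀ = α j)
    (hβ : ∀ j, 1 ≤ j → j ≤ k → IsUnit (β j))
    (hT1 : (blockTridiag p (k+1) α β).IsHermitian)
    (hTk : (blockTridiag p k α β).IsHermitian)
    -- sorted (with multiplicity) eigenvalue sequences of `T_k` and `T_{k+1}`
    (θk : Fin (k * p) → ℝ) (θk1 : Fin ((k+1) * p) → ℝ)
    (hθk : Monotone θk) (hθk1 : Monotone θk1)
    (hθke : ∃ e : Fin (k * p) ≃ Fin k × Fin p, θk = hTk.eigenvalues ∘ e)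
    (hθk1e : ∃ e : Fin ((k+1) * p) ≃ Fin (k+1) × Fin p, θk1 = hT1.eigenvalues ∘ e) :
    (∀ (i j : Fin (k * p)) (i' : Fin ((k+1) * p)),
        (j : ℕ) = (i : ℕ) + p → (i' : ℕ) = (i : ℕ) + p →
        θk i < θk1 i' ∧ θk1 i' < θk j) ∧
    (∀ (i' : Fin ((k+1) * p)) (j : Fin (k * p)),
        (i' : ℕ) = 0 → (j : ℕ) = 0 → θk1 i' < θk j) ∧
    (∀ (i : Fin (k * p)) (j' : Fin ((k+1) * p)),
        (i : ℕ) = k * p - 1 → (j' : ℕ) = (k+1) * p - 1 → θk i < θk1 j') := by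
  have core := interlace_core p k α β hβ hT1 hTk θk θk1 hθk hθk1 hθke hθk1e
  obtain ⟨cI, cII⟩ := core
  refine ⟨?_, ?_, ?_⟩
  · intro i j i' hj hi'
    exact ⟨cII i i' hi', cI j i' (by omega)⟩
  · intro i' j h0 h0'
    exact cI j i' (by omega)
  · intro i j' hi hj'
    apply cII i j'
    have hexp : (k+1)*p = k*p + p := by ring
    have h1 := i.isLt
    have h2 := j'.isLt
    omega
end
end

section
/- Consider the continuation process generated from a symmetric $A \in \mathbb{R}^{n\times n}$, block vectors $v_{k-1}, v_k \in \mathbb{R}^{n\times p}$, blocks $\alpha_k, \beta_k \in \mathbb{R}^{p\times p}$, and $W_k \in \mathbb{R}^{n\times m}$ with $W_k^T W_k = I_m$. Then for every $j \ge 1$ the set consisting of the columns of $W_k$ together with the columns of $q_{k+1},\dots,q_{k+j}$ is orthonormal; moreover, for every $j \ge 3$, $\beta_{k+j} = q_{k+j}^T A q_{k+j-1}$. -/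
open Matrix
open scoped Matrix.Norms.L2Operator

noncomputable section

/-- The continuation process generated from a symmetric `A`, block vectors
`v_{k-1} = vkm1`, `v_k = vk`, blocks `α_k = αk`, `β_k = βk`, and `W = W_k` with
orthonormal columns.  Here `q j` stands for `q_{k+j}` (the value at `j = 0` is
irrelevant), `pdim j ≤ p` is the number of columns of `q_{k+j}`, `β1` stands for
`β_{k+1}` and `βs j` for `β_{k+j+2}`.  Each `q_{k+j}` has orthonormal columns which
form an orthonormal basis of the column space of `(I - P_j) q̃_{k+j}` (this is
captured by the defining equations `q_{k+j} β_{k+j} = (I - P_j) q̃_{k+j}` together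
with the full row rank of the `β`'s), where `P_1 = W Wᵀ`,
`P_2 = P_1 + q_{k+1} q_{k+1}ᵀ` and `P_j = P_2 + q_{k+j-1} q_{k+j-1}ᵀ` for `j ≥ 3`. -/
structure ContProcess (n p m : ℕ) (A : Matrix (Fin n) (Fin n) ℝ)
    (vkm1 vk : Matrix (Fin n) (Fin p) ℝ) (αk βk : Matrix (Fin p) (Fin p) ℝ)
    (W : Matrix (Fin n) (Fin m) ℝ) : Type where
  pdim : ℕ → ℕ
  pdim_le : ∀ j, pdim j ≤ p
  q : (j : ℕ) → Matrix (Fin n) (Fin (pdim j)) ℝ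
  β1 : Matrix (Fin (pdim 1)) (Fin p) ℝ
  βs : (j : ℕ) → Matrix (Fin (pdim (j+2))) (Fin (pdim (j+1))) ℝ
  hW : Wᵀ * W = 1
  horth : ∀ j, 1 ≤ j → (q j)ᵀ * q j = 1
  hq1 : q 1 * β1 = (1 - W * Wᵀ) * (A * vk - vk * αk - vkm1 * βkᵀ)
  hq2 : q 2 * βs 0 = (1 - (W * Wᵀ + q 1 * (q 1)ᵀ)) * (A * q 1 - vk * β1ᵀ)
  hq3 : ∀ j, q (j+3) * βs (j+1) =
      (1 - (W * Wᵀ + q 1 * (q 1)ᵀ + q (j+2) * (q (j+2))ᵀ)) *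
        (A * q (j+2) - q (j+1) * (βs j)ᵀ)
  hβ1rank : β1.rank = pdim 1
  hβsrank : ∀ j, (βs j).rank = pdim (j+2)

lemma tzero {a b c : ℕ} {X : Matrix (Fin b) (Fin a) ℝ} {Y : Matrix (Fin b) (Fin c) ℝ}
    (h : Xᵀ * Y = 0) : Yᵀ * X = 0 := by
  have := congrArg Matrix.transpose h
  simpa [Matrix.transpose_mul] using this

lemma cancel_right {r c k : ℕ} (B : Matrix (Fin r) (Fin c) ℝ) (hB : B.rank = r)
    {X : Matrix (Fin k) (Fin r) ℝ} (h : X * B = 0) : X = 0 := by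
  have hsurj : Function.Surjective B.mulVecLin := by
    rw [← LinearMap.range_eq_top]
    apply Submodule.eq_top_of_finrank_eq
    rw [Module.finrank_fin_fun]
    exact hB
  ext i j
  obtain ⟨y, hy⟩ := hsurj (Pi.single j 1)
  have h0 : X *ᵥ (B *ᵥ y) = 0 := by
    rw [Matrix.mulVec_mulVec, h, Matrix.zero_mulVec]
  have hy' : B *ᵥ y = Pi.single j 1 := hy
  rw [hy'] at h0
  have := congrFun h0 i
  simpa using this

lemma projgen1 {n a b e : ℕ} (M : Matrix (Fin a) (Fin n) ℝ) (W : Matrix (Fin n) (Fin b) ℝ)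
    (X : Matrix (Fin n) (Fin e) ℝ) :
    M * ((1 - W * Wᵀ) * X) = M * X - (M * W) * (Wᵀ * X) := by
  simp only [Matrix.sub_mul, Matrix.one_mul, Matrix.mul_sub, Matrix.mul_assoc]

lemma projgen2 {n a b c e : ℕ} (M : Matrix (Fin a) (Fin n) ℝ) (W : Matrix (Fin n) (Fin b) ℝ)
    (q1 : Matrix (Fin n) (Fin c) ℝ) (X : Matrix (Fin n) (Fin e) ℝ) :
    M * ((1 - (W * Wᵀ + q1 * q1ᵀ)) * X)
      = M * X - (M * W) * (Wᵀ * X) - (M * q1) * (q1ᵀ * X) := by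
  simp only [Matrix.sub_mul, Matrix.add_mul, Matrix.one_mul, Matrix.mul_sub, Matrix.mul_add,
    Matrix.mul_assoc]
  abel

lemma projgen3 {n a b c d e : ℕ} (M : Matrix (Fin a) (Fin n) ℝ) (W : Matrix (Fin n) (Fin b) ℝ)
    (q1 : Matrix (Fin n) (Fin c) ℝ) (qq : Matrix (Fin n) (Fin d) ℝ)
    (X : Matrix (Fin n) (Fin e) ℝ) :
    M * ((1 - (W * Wᵀ + q1 * q1ᵀ + qq * qqᵀ)) * X)
      = M * X - (M * W) * (Wᵀ * X) - (M * q1) * (q1ᵀ * X) - (M * qq) * (qqᵀ * X) := by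
  simp only [Matrix.sub_mul, Matrix.add_mul, Matrix.one_mul, Matrix.mul_sub, Matrix.mul_add,
    Matrix.mul_assoc]
  abel

/-- the columns of `W` together with those of `q_{k+1}, …, q_{k+j}` form an
orthonormal set, and `β_{k+j} = q_{k+j}ᵀ A q_{k+j-1}` for `j ≥ 3`. -/
theorem stmt5 (n p m : ℕ) (A : Matrix (Fin n) (Fin n) ℝ) (hA : A.IsHermitian)
    (vkm1 vk : Matrix (Fin n) (Fin p) ℝ) (αk βk : Matrix (Fin p) (Fin p) ℝ)
    (W : Matrix (Fin n) (Fin m) ℝ)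
    (P : ContProcess n p m A vkm1 vk αk βk W) :
    (∀ j, 1 ≤ j → Wᵀ * P.q j = 0) ∧
    (∀ j, 1 ≤ j → (P.q j)ᵀ * P.q j = 1) ∧
    (∀ i j, 1 ≤ i → i < j → (P.q i)ᵀ * P.q j = 0) ∧
    (∀ j, P.βs (j+1) = (P.q (j+3))ᵀ * A * P.q (j+2)) := by
  have hAT : Aᵀ = A := by
    ext i j
    have := congrFun (congrFun hA i) j
    simpa [Matrix.conjTranspose_apply] using this
  have key : ∀ t, 1 ≤ t → (Wᵀ * P.q t = 0) ∧
      (∀ i, 1 ≤ i → i < t → (P.q i)ᵀ * P.q t = 0) ∧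
      (∀ l, l + 3 = t → P.βs (l+1) = (P.q (l+3))ᵀ * A * P.q (l+2)) := by
    intro t
    induction t using Nat.strong_induction_on with
    | _ t ih =>
    intro ht
    match t, ht with
    | 1, _ =>
      refine ⟨?_, by intro i hi hlt; omega, by intro l hl; omega⟩
      apply cancel_right P.β1 P.hβ1rank
      have h : Wᵀ * (P.q 1 * P.β1)
          = Wᵀ * ((1 - W * Wᵀ) * (A * vk - vk * αk - vkm1 * βkᵀ)) := by rw [P.hq1]
      rw [projgen1, P.hW, Matrix.one_mul, sub_self, ← Matrix.mul_assoc] at h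
      exact h
    | 2, _ =>
      have hWq1 : Wᵀ * P.q 1 = 0 := (ih 1 (by omega) (by omega)).1
      have h11 : (P.q 1)ᵀ * P.q 1 = 1 := P.horth 1 (by omega)
      have hWq2 : Wᵀ * P.q 2 = 0 := by
        apply cancel_right (P.βs 0) (P.hβsrank 0)
        have h : Wᵀ * (P.q 2 * P.βs 0)
            = Wᵀ * ((1 - (W * Wᵀ + P.q 1 * (P.q 1)ᵀ)) * (A * P.q 1 - vk * P.β1ᵀ)) := by
          rw [P.hq2]
        rw [projgen2, P.hW, hWq1, Matrix.zero_mul, Matrix.one_mul, sub_zero, sub_self,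
          ← Matrix.mul_assoc] at h
        exact h
      have h1q2 : (P.q 1)ᵀ * P.q 2 = 0 := by
        apply cancel_right (P.βs 0) (P.hβsrank 0)
        have h : (P.q 1)ᵀ * (P.q 2 * P.βs 0)
            = (P.q 1)ᵀ * ((1 - (W * Wᵀ + P.q 1 * (P.q 1)ᵀ)) * (A * P.q 1 - vk * P.β1ᵀ)) := by
          rw [P.hq2]
        rw [projgen2, tzero hWq1, Matrix.zero_mul, h11, Matrix.one_mul, sub_zero, sub_self,
          ← Matrix.mul_assoc] at h
        exact h
      refine ⟨hWq2, ?_, by intro l hl; omega⟩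
      intro i hi hlt
      obtain rfl : i = 1 := by omega
      exact h1q2
    | (j+3), _ =>
      have F : ∀ s, 1 ≤ s → s < j+3 →
          (Wᵀ * P.q s = 0 ∧ ∀ i, 1 ≤ i → i < s → (P.q i)ᵀ * P.q s = 0) := by
        intro s hs hlt
        exact ⟨(ih s hlt hs).1, (ih s hlt hs).2.1⟩
      have Fβ : ∀ l, l + 3 < j + 3 → P.βs (l+1) = (P.q (l+3))ᵀ * A * P.q (l+2) := by
        intro l h
        exact (ih (l+3) h (by omega)).2.2 l rfl
      have hWq1 : Wᵀ * P.q 1 = 0 := (F 1 (by omega) (by omega)).1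
      have hWq2 : Wᵀ * P.q (j+2) = 0 := (F (j+2) (by omega) (by omega)).1
      have h1q2 : (P.q 1)ᵀ * P.q (j+2) = 0 := (F (j+2) (by omega) (by omega)).2 1 (by omega) (by omega)
      -- (a) orthogonality to W
      have hWnew : Wᵀ * P.q (j+3) = 0 := by
        apply cancel_right (P.βs (j+1)) (P.hβsrank (j+1))
        have h : Wᵀ * (P.q (j+3) * P.βs (j+1))
            = Wᵀ * ((1 - (W * Wᵀ + P.q 1 * (P.q 1)ᵀ + P.q (j+2) * (P.q (j+2))ᵀ)) *
                (A * P.q (j+2) - P.q (j+1) * (P.βs j)ᵀ)) := by rw [P.hq3 j]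
        rw [projgen3] at h
        simp only [Matrix.mul_sub, ← Matrix.mul_assoc, P.hW, hWq1, hWq2,
          Matrix.zero_mul, Matrix.one_mul, sub_zero, sub_self] at h
        exact h
      -- key fact: q(j+2)ᵀ A q(i'+2) = 0 for i'+2 ≤ j
      have hAq : ∀ i', i' + 2 ≤ j → (P.q (j+2))ᵀ * A * P.q (i'+2) = 0 := by
        intro i' hi'
        have h : (P.q (j+2))ᵀ * (P.q (i'+3) * P.βs (i'+1))
            = (P.q (j+2))ᵀ * ((1 - (W * Wᵀ + P.q 1 * (P.q 1)ᵀ + P.q (i'+2) * (P.q (i'+2))ᵀ)) *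
                (A * P.q (i'+2) - P.q (i'+1) * (P.βs i')ᵀ)) := by rw [P.hq3 i']
        have hz1 : (P.q (j+2))ᵀ * W = 0 := tzero hWq2
        have hz2 : (P.q (j+2))ᵀ * P.q 1 = 0 := tzero h1q2
        have hz3 : (P.q (j+2))ᵀ * P.q (i'+2) = 0 :=
          tzero ((F (j+2) (by omega) (by omega)).2 (i'+2) (by omega) (by omega))
        have hz4 : (P.q (j+2))ᵀ * P.q (i'+3) = 0 :=
          tzero ((F (j+2) (by omega) (by omega)).2 (i'+3) (by omega) (by omega))
        have hz5 : (P.q (j+2))ᵀ * P.q (i'+1) = 0 :=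
          tzero ((F (j+2) (by omega) (by omega)).2 (i'+1) (by omega) (by omega))
        rw [projgen3] at h
        simp only [Matrix.mul_sub, ← Matrix.mul_assoc, hz1, hz2, hz3, hz4, hz5,
          Matrix.zero_mul, sub_zero, zero_sub, neg_eq_zero, sub_self] at h
        exact h.symm
      -- (b) orthogonality to previous q's
      have hOrth : ∀ i, 1 ≤ i → i < j+3 → (P.q i)ᵀ * P.q (j+3) = 0 := by
        intro i hi hlt
        apply cancel_right (P.βs (j+1)) (P.hβsrank (j+1))
        have h : (P.q i)ᵀ * (P.q (j+3) * P.βs (j+1))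
            = (P.q i)ᵀ * ((1 - (W * Wᵀ + P.q 1 * (P.q 1)ᵀ + P.q (j+2) * (P.q (j+2))ᵀ)) *
                (A * P.q (j+2) - P.q (j+1) * (P.βs j)ᵀ)) := by rw [P.hq3 j]
        rw [projgen3] at h
        rcases eq_or_ne i (j+2) with rfl | hne2
        · simp only [Matrix.mul_sub, ← Matrix.mul_assoc, tzero hWq2, tzero h1q2,
            P.horth (j+2) (by omega), Matrix.zero_mul, Matrix.one_mul, sub_zero,
            sub_self] at h
          exact h
        rcases eq_or_ne i 1 with rfl | hne1
        · simp only [Matrix.mul_sub, ← Matrix.mul_assoc, tzero hWq1, h1q2,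
            P.horth 1 (by omega), Matrix.zero_mul, Matrix.one_mul, sub_zero,
            sub_self] at h
          exact h
        -- now 2 ≤ i ≤ j+1
        have hiW : (P.q i)ᵀ * W = 0 := tzero (F i hi (by omega)).1
        have hiq1 : (P.q i)ᵀ * P.q 1 = 0 := tzero ((F i hi (by omega)).2 1 (by omega) (by omega))
        have hiq2 : (P.q i)ᵀ * P.q (j+2) = 0 :=
          (F (j+2) (by omega) (by omega)).2 i hi (by omega)
        rcases eq_or_ne i (j+1) with rfl | hne3
        · -- i = j+1 : uses the β identity and the symmetry of A
          obtain ⟨j', rfl⟩ : ∃ j', j = j' + 1 := ⟨j - 1, by omega⟩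
          have hcancel : (P.βs (j'+1))ᵀ = (P.q (j'+1+1))ᵀ * A * P.q (j'+1+2) := by
            rw [Fβ j' (by omega), Matrix.transpose_mul, Matrix.transpose_mul,
              Matrix.transpose_transpose, hAT, ← Matrix.mul_assoc]
          simp only [Matrix.mul_sub, ← Matrix.mul_assoc, hiW, hiq1, hiq2, hcancel,
            P.horth (j'+1+1) (by omega), Matrix.zero_mul, Matrix.one_mul, sub_zero,
            sub_self] at h
          exact h
        · -- 2 ≤ i ≤ j
          obtain ⟨i', rfl⟩ : ∃ i', i = i' + 2 := ⟨i - 2, by omega⟩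
          have h1 : (P.q (i'+2))ᵀ * P.q (j+1) = 0 :=
            (F (j+1) (by omega) (by omega)).2 (i'+2) (by omega) (by omega)
          have h2 : (P.q (i'+2))ᵀ * A * P.q (j+2) = 0 := by
            have h0 := hAq i' (by omega)
            rw [Matrix.mul_assoc] at h0
            have h3 := tzero h0
            rw [Matrix.transpose_mul, Matrix.mul_assoc, hAT, ← Matrix.mul_assoc] at h3
            exact h3
          simp only [Matrix.mul_sub, ← Matrix.mul_assoc, hiW, hiq1, hiq2, h1, h2,
            Matrix.zero_mul, sub_zero, sub_self] at h
          exact h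
      -- (c) the β identity
      have hβnew : P.βs (j+1) = (P.q (j+3))ᵀ * A * P.q (j+2) := by
        have h : (P.q (j+3))ᵀ * (P.q (j+3) * P.βs (j+1))
            = (P.q (j+3))ᵀ * ((1 - (W * Wᵀ + P.q 1 * (P.q 1)ᵀ + P.q (j+2) * (P.q (j+2))ᵀ)) *
                (A * P.q (j+2) - P.q (j+1) * (P.βs j)ᵀ)) := by rw [P.hq3 j]
        have hz1 : (P.q (j+3))ᵀ * W = 0 := tzero hWnew
        have hz2 : (P.q (j+3))ᵀ * P.q 1 = 0 := tzero (hOrth 1 (by omega) (by omega))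
        have hz3 : (P.q (j+3))ᵀ * P.q (j+2) = 0 := tzero (hOrth (j+2) (by omega) (by omega))
        have hz4 : (P.q (j+3))ᵀ * P.q (j+1) = 0 := tzero (hOrth (j+1) (by omega) (by omega))
        rw [projgen3] at h
        simp only [Matrix.mul_sub, ← Matrix.mul_assoc, hz1, hz2, hz3, hz4,
          P.horth (j+3) (by omega), Matrix.zero_mul, Matrix.one_mul, sub_zero] at h
        exact h
      refine ⟨hWnew, hOrth, ?_⟩
      intro l hl
      obtain rfl : l = j := by omega
      exact hβnew
  refine ⟨fun j hj => (key j hj).1, fun j hj => P.horth j hj,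
    fun i j hi hij => (key j (by omega)).2.1 i hi hij,
    fun j => (key (j+3) (by omega)).2.2 j rfl⟩
end
end

section
/- Consider the continuation process generated from a symmetric $A \in \mathbb{R}^{n\times n}$, block vectors $v_{k-1}, v_k \in \mathbb{R}^{n\times p}$, blocks $\alpha_k, \beta_k \in \mathbb{R}^{p\times p}$, and $W_k \in \mathbb{R}^{n\times m}$ with $W_k^T W_k = I_m$. Define $\alpha_{k+1} = q_{k+1}^T(A q_{k+1} - v_k\beta_{k+1}^T)$ and $\alpha_{k+j-1} = q_{k+j-1}^T A q_{k+j-1}$ for $j \ge 3$, and define $h_k = P_1(A v_k - v_k\alpha_k - v_{k-1}\beta_k^T)$, $h_{k+1} = P_1(A q_{k+1} - v_k\beta_{k+1}^T)$, and $h_{k+j-1} = P_1 A q_{k+j-1} + q_{k+1}\beta_{k+1} v_k^T q_{k+j-1}$ for $j \ge 3$, where $P_1 = W_k W_k^T$. Then the process satisfies the perturbed three-term recurrences: $q_{k+1}\beta_{k+1} = A v_k - v_k\alpha_k - v_{k-1}\beta_k^T - h_k$; $q_{k+2}\beta_{k+2} = A q_{k+1} - q_{k+1}\alpha_{k+1}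 - v_k\beta_{k+1}^T - h_{k+1}$; and $q_{k+j}\beta_{k+j} = A q_{k+j-1} - q_{k+j-1}\alpha_{k+j-1} - q_{k+j-2}\beta_{k+j-1}^T - h_{k+j-1}$ for $j \ge 3$. -/
open Matrix
open scoped Matrix.Norms.L2Operator

noncomputable section

private lemma right_inv {a b : ℕ} (B : Matrix (Fin a) (Fin b) ℝ) (h : B.rank = a) :
    ∃ C : Matrix (Fin b) (Fin a) ℝ, B * C = 1 := by
  have hG : (B * Bᵀ).rank = a := by rw [Matrix.rank_self_mul_transpose, h]
  have hU : IsUnit (B * Bᵀ) := by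
    rw [← Matrix.mulVec_surjective_iff_isUnit]
    have htop : LinearMap.range (B * Bᵀ).mulVecLin = ⊤ := by
      apply Submodule.eq_top_of_finrank_eq
      rw [← Matrix.rank.eq_def] at *
      simp [hG]
    intro y
    obtain ⟨x, hx⟩ := LinearMap.range_eq_top.mp htop y
    exact ⟨x, by rw [← Matrix.mulVecLin_apply]; exact hx⟩
  have hdet : IsUnit (B * Bᵀ).det := (Matrix.isUnit_iff_isUnit_det _).mp hU
  exact ⟨Bᵀ * (B * Bᵀ)⁻¹, by rw [← Matrix.mul_assoc, Matrix.mul_nonsing_inv _ hdet]⟩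

private lemma mulz {n₁ n₂ n₃ n₄ : ℕ} {X : Matrix (Fin n₁) (Fin n₂) ℝ}
    {Y : Matrix (Fin n₂) (Fin n₃) ℝ} (h : X * Y = 0) (M : Matrix (Fin n₃) (Fin n₄) ℝ) :
    X * (Y * M) = 0 := by
  rw [← Matrix.mul_assoc, h, Matrix.zero_mul]

private lemma mul1 {n₁ n₂ n₃ : ℕ} {X : Matrix (Fin n₁) (Fin n₂) ℝ}
    {Y : Matrix (Fin n₂) (Fin n₁) ℝ} (h : X * Y = 1) (M : Matrix (Fin n₁) (Fin n₃) ℝ) :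
    X * (Y * M) = M := by
  rw [← Matrix.mul_assoc, h, Matrix.one_mul]

private lemma zsymm {n a b : ℕ} {X : Matrix (Fin n) (Fin a) ℝ} {Y : Matrix (Fin n) (Fin b) ℝ}
    (h : Xᵀ * Y = 0) : Yᵀ * X = 0 := by
  have := congrArg Matrix.transpose h
  rwa [Matrix.transpose_mul, Matrix.transpose_transpose, Matrix.transpose_zero] at this

private lemma q_eq {n a b : ℕ} {Q : Matrix (Fin n) (Fin a) ℝ} {β : Matrix (Fin a) (Fin b) ℝ}
    {R : Matrix (Fin n) (Fin b) ℝ} {C : Matrix (Fin b) (Fin a) ℝ}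
    (h : Q * β = R) (hC : β * C = 1) : Q = R * C := by
  rw [← h, Matrix.mul_assoc, hC, Matrix.mul_one]

private lemma cancel {n a b g : ℕ} {X : Matrix (Fin n) (Fin a) ℝ} {R : Matrix (Fin n) (Fin b) ℝ}
    {Q : Matrix (Fin n) (Fin g) ℝ} {C : Matrix (Fin b) (Fin g) ℝ}
    (hQ : Q = R * C) (hz : Xᵀ * R = 0) : Xᵀ * Q = 0 := by
  rw [hQ, ← Matrix.mul_assoc, hz, Matrix.zero_mul]

private lemma transposed {n a b : ℕ} {A : Matrix (Fin n) (Fin n) ℝ} (hAT : Aᵀ = A)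
    {U : Matrix (Fin n) (Fin a) ℝ} {V : Matrix (Fin n) (Fin b) ℝ}
    {D : Matrix (Fin b) (Fin a) ℝ}
    (h : Vᵀ * (A * U) = D) : Uᵀ * (A * V) = Dᵀ := by
  rw [← h, Matrix.transpose_mul, Matrix.transpose_mul, Matrix.transpose_transpose, hAT,
    Matrix.mul_assoc]

/-- the continuation process can be written as a perturbed three-term
recurrence, with `α_{k+1} = q_{k+1}ᵀ(A q_{k+1} - v_k β_{k+1}ᵀ)`,
`α_{k+j-1} = q_{k+j-1}ᵀ A q_{k+j-1}` for `j ≥ 3`, and perturbation terms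
`h_k = P₁(A v_k - v_k α_k - v_{k-1} β_kᵀ)`, `h_{k+1} = P₁(A q_{k+1} - v_k β_{k+1}ᵀ)`,
`h_{k+j-1} = P₁ A q_{k+j-1} + q_{k+1} β_{k+1} v_kᵀ q_{k+j-1}`, where `P₁ = W Wᵀ`. -/
theorem stmt6 (n p m : ℕ) (A : Matrix (Fin n) (Fin n) ℝ) (hA : A.IsHermitian)
    (vkm1 vk : Matrix (Fin n) (Fin p) ℝ) (αk βk : Matrix (Fin p) (Fin p) ℝ)
    (W : Matrix (Fin n) (Fin m) ℝ)
    (P : ContProcess n p m A vkm1 vk αk βk W) :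
    (P.q 1 * P.β1 =
      A * vk - vk * αk - vkm1 * βkᵀ - W * Wᵀ * (A * vk - vk * αk - vkm1 * βkᵀ)) ∧
    (P.q 2 * P.βs 0 =
      A * P.q 1 - P.q 1 * ((P.q 1)ᵀ * (A * P.q 1 - vk * P.β1ᵀ)) - vk * P.β1ᵀ -
        W * Wᵀ * (A * P.q 1 - vk * P.β1ᵀ)) ∧
    (∀ j, P.q (j+3) * P.βs (j+1) =
      A * P.q (j+2) - P.q (j+2) * ((P.q (j+2))ᵀ * A * P.q (j+2)) -
        P.q (j+1) * (P.βs j)ᵀ -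
        (W * Wᵀ * A * P.q (j+2) + P.q 1 * P.β1 * vkᵀ * P.q (j+2))) := by
  obtain ⟨C1, hC1⟩ := right_inv P.β1 P.hβ1rank
  choose Cs hCs using fun j => right_inv (P.βs j) (P.hβsrank j)
  have hAT : Aᵀ = A := by simpa using hA.eq
  -- expanded recurrences
  have h1 : P.q 1 * P.β1
      = (A * vk - vk * αk - vkm1 * βkᵀ) - W * (Wᵀ * (A * vk - vk * αk - vkm1 * βkᵀ)) := by
    rw [P.hq1]
    simp only [Matrix.sub_mul, Matrix.one_mul, Matrix.mul_assoc]
  have h2 : P.q 2 * P.βs 0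
      = (A * P.q 1 - vk * P.β1ᵀ)
        - (W * (Wᵀ * (A * P.q 1 - vk * P.β1ᵀ))
          + P.q 1 * ((P.q 1)ᵀ * (A * P.q 1 - vk * P.β1ᵀ))) := by
    rw [P.hq2]
    simp only [Matrix.sub_mul, Matrix.one_mul, Matrix.add_mul, Matrix.mul_assoc]
  have h3 : ∀ j, P.q (j+3) * P.βs (j+1)
      = (A * P.q (j+2) - P.q (j+1) * (P.βs j)ᵀ)
        - (W * (Wᵀ * (A * P.q (j+2) - P.q (j+1) * (P.βs j)ᵀ))
          + P.q 1 * ((P.q 1)ᵀ * (A * P.q (j+2) - P.q (j+1) * (P.βs j)ᵀ))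
          + P.q (j+2) * ((P.q (j+2))ᵀ * (A * P.q (j+2) - P.q (j+1) * (P.βs j)ᵀ))) := by
    intro j
    rw [P.hq3 j]
    simp only [Matrix.sub_mul, Matrix.one_mul, Matrix.add_mul, Matrix.mul_assoc]
  have hQ1 := q_eq h1 hC1
  have hQ2 := q_eq h2 (hCs 0)
  have hQ3 := fun j => q_eq (h3 j) (hCs (j+1))
  -- A-expansions
  have hAq1 : A * P.q 1
      = P.q 2 * P.βs 0
        + (W * (Wᵀ * (A * P.q 1 - vk * P.β1ᵀ))
          + P.q 1 * ((P.q 1)ᵀ * (A * P.q 1 - vk * P.β1ᵀ)))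
        + vk * P.β1ᵀ := by
    rw [h2]; abel
  have hAq : ∀ a, A * P.q (a+2)
      = P.q (a+3) * P.βs (a+1)
        + (W * (Wᵀ * (A * P.q (a+2) - P.q (a+1) * (P.βs a)ᵀ))
          + P.q 1 * ((P.q 1)ᵀ * (A * P.q (a+2) - P.q (a+1) * (P.βs a)ᵀ))
          + P.q (a+2) * ((P.q (a+2))ᵀ * (A * P.q (a+2) - P.q (a+1) * (P.βs a)ᵀ)))
        + P.q (a+1) * (P.βs a)ᵀ := by
    intro a
    rw [h3 a]; abel
  -- orthogonality to W
  have hWq' : ∀ t, 1 ≤ t → Wᵀ * P.q t = 0 := by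
    intro t
    induction t using Nat.strong_induction_on with
    | _ t ih =>
      intro ht
      rcases Nat.lt_or_ge t 2 with h | h
      · obtain rfl : t = 1 := by omega
        refine cancel hQ1 ?_
        simp only [Matrix.mul_sub, mul1 P.hW, sub_self]
      rcases Nat.lt_or_ge t 3 with h' | h'
      · obtain rfl : t = 2 := by omega
        have hw1 : Wᵀ * P.q 1 = 0 := ih 1 (by omega) (by omega)
        refine cancel hQ2 ?_
        simp only [Matrix.mul_sub, Matrix.mul_add, mul1 P.hW, mulz hw1, add_zero, sub_self]
      · obtain ⟨i, rfl⟩ : ∃ i, t = i + 3 := ⟨t - 3, by omega⟩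
        have hw1 : Wᵀ * P.q 1 = 0 := ih 1 (by omega) (by omega)
        have hwi : Wᵀ * P.q (i+2) = 0 := ih (i+2) (by omega) (by omega)
        refine cancel (hQ3 i) ?_
        simp only [Matrix.mul_sub, Matrix.mul_add, mul1 P.hW, mulz hw1, mulz hwi, add_zero,
          sub_self]
  -- orthogonality to q 1
  have hq1q' : ∀ t, 2 ≤ t → (P.q 1)ᵀ * P.q t = 0 := by
    intro t
    induction t using Nat.strong_induction_on with
    | _ t ih =>
      intro ht
      rcases Nat.lt_or_ge t 3 with h' | h'
      · obtain rfl : t = 2 := by omega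
        refine cancel hQ2 ?_
        simp only [Matrix.mul_sub, Matrix.mul_add, mulz (zsymm (hWq' 1 le_rfl)),
          mul1 (P.horth 1 le_rfl), zero_add, sub_self]
      · obtain ⟨i, rfl⟩ : ∃ i, t = i + 3 := ⟨t - 3, by omega⟩
        have hprev : (P.q 1)ᵀ * P.q (i+2) = 0 := ih (i+2) (by omega) (by omega)
        refine cancel (hQ3 i) ?_
        simp only [Matrix.mul_sub, Matrix.mul_add, mulz (zsymm (hWq' 1 le_rfl)),
          mul1 (P.horth 1 le_rfl), mulz hprev, zero_add, add_zero, sub_self]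
  -- full mutual orthogonality
  have horth' : ∀ N i, 1 ≤ i → i < N → (P.q i)ᵀ * P.q N = 0 := by
    intro N
    induction N using Nat.strong_induction_on with
    | _ N ih =>
      intro i hi1 hiN
      rcases Nat.lt_or_ge N 3 with hN | hN
      · obtain rfl : N = 2 := by omega
        obtain rfl : i = 1 := by omega
        exact hq1q' 2 le_rfl
      obtain ⟨M, rfl⟩ : ∃ M, N = M + 3 := ⟨N - 3, by omega⟩
      rcases Nat.lt_or_ge i 2 with hi2 | hi2
      · obtain rfl : i = 1 := by omega
        exact hq1q' (M+3) (by omega)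
      obtain ⟨a, rfl⟩ : ∃ a, i = a + 2 := ⟨i - 2, by omega⟩
      rcases Nat.lt_trichotomy (a+1) M with hlt | heq | hgt
      · -- far case : a + 2 < M + 2
        have f1 : (P.q (a+3))ᵀ * P.q (M+2) = 0 := ih (M+2) (by omega) (a+3) (by omega) (by omega)
        have f2 : (P.q (a+2))ᵀ * P.q (M+2) = 0 := ih (M+2) (by omega) (a+2) (by omega) (by omega)
        have f3 : (P.q (a+1))ᵀ * P.q (M+2) = 0 := ih (M+2) (by omega) (a+1) (by omega) (by omega)
        have f4 : (P.q (a+2))ᵀ * P.q (M+1) = 0 := ih (M+1) (by omega) (a+2) (by omega) (by omega)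
        have fW2 : Wᵀ * P.q (M+2) = 0 := hWq' (M+2) (by omega)
        have f12 : (P.q 1)ᵀ * P.q (M+2) = 0 := hq1q' (M+2) (by omega)
        have hD : (P.q (M+2))ᵀ * (A * P.q (a+2)) = 0 := by
          rw [hAq a]
          simp only [Matrix.mul_add, mulz (zsymm f1), mulz (zsymm fW2), mulz (zsymm f12),
            mulz (zsymm f2), mulz (zsymm f3), add_zero, zero_add]
        have hT : (P.q (a+2))ᵀ * (A * P.q (M+2)) = 0 := by
          have := transposed hAT hD
          rwa [Matrix.transpose_zero] at this
        refine cancel (hQ3 M) ?_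
        simp only [Matrix.mul_sub, Matrix.mul_add, hT, mulz f4,
          mulz (zsymm (hWq' (a+2) (by omega))), mulz (zsymm (hq1q' (a+2) (by omega))), mulz f2,
          sub_zero, add_zero, zero_add, sub_self, zero_sub, neg_zero]
      · -- near case : a + 2 = M + 1
        subst heq
        have f1 : (P.q (a+2))ᵀ * P.q (a+3) = 0 := ih (a+3) (by omega) (a+2) (by omega) (by omega)
        have f3 : (P.q (a+1))ᵀ * P.q (a+3) = 0 := ih (a+3) (by omega) (a+1) (by omega) (by omega)
        have fW : Wᵀ * P.q (a+3) = 0 := hWq' (a+3) (by omega)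
        have f12 : (P.q 1)ᵀ * P.q (a+3) = 0 := hq1q' (a+3) (by omega)
        have ho : (P.q (a+1+2))ᵀ * P.q (a+3) = 1 := P.horth (a+3) (by omega)
        have hw : (P.q (a+1+2))ᵀ * W = 0 := zsymm fW
        have g1 : (P.q (a+1+2))ᵀ * P.q 1 = 0 := zsymm f12
        have g2 : (P.q (a+1+2))ᵀ * P.q (a+2) = 0 := zsymm f1
        have g3 : (P.q (a+1+2))ᵀ * P.q (a+1) = 0 := zsymm f3
        have hD : (P.q (a+1+2))ᵀ * (A * P.q (a+2)) = P.βs (a+1) := by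
          rw [hAq a]
          simp only [Matrix.mul_add, mul1 ho, mulz hw, mulz g1, mulz g2, mulz g3, add_zero,
            zero_add]
        have hT : (P.q (a+2))ᵀ * (A * P.q (a+1+2)) = (P.βs (a+1))ᵀ := transposed hAT hD
        have ho2 : (P.q (a+2))ᵀ * P.q (a+1+1) = 1 := P.horth (a+2) (by omega)
        have fv : (P.q (a+2))ᵀ * P.q (a+1+2) = 0 := f1
        refine cancel (hQ3 (a+1)) ?_
        simp only [Matrix.mul_sub, Matrix.mul_add, hT, mul1 ho2,
          mulz (zsymm (hWq' (a+2) (by omega))), mulz (zsymm (hq1q' (a+2) (by omega))), mulz fv,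
          sub_self, sub_zero, add_zero, zero_add]
      · -- consecutive case : a = M
        obtain rfl : a = M := by omega
        refine cancel (hQ3 a) ?_
        simp only [Matrix.mul_sub, Matrix.mul_add, mulz (zsymm (hWq' (a+2) (by omega))),
          mulz (zsymm (hq1q' (a+2) (by omega))), mul1 (P.horth (a+2) (by omega)), zero_add,
          add_zero, sub_self]
  refine ⟨?_, ?_, ?_⟩
  · rw [P.hq1, Matrix.sub_mul, Matrix.one_mul]
  · rw [P.hq2, Matrix.sub_mul, Matrix.one_mul, Matrix.add_mul]
    simp only [Matrix.mul_assoc]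
    abel
  · intro j
    obtain rfl | ⟨i, rfl⟩ : j = 0 ∨ ∃ i, j = i + 1 := by
      rcases j with _ | i
      exacts [Or.inl rfl, Or.inr ⟨i, rfl⟩]
    · -- j = 0
      have ho : (P.q (0+2))ᵀ * P.q 2 = 1 := P.horth 2 (by omega)
      have hw : (P.q (0+2))ᵀ * W = 0 := zsymm (hWq' (0+2) (by omega))
      have g1 : (P.q (0+2))ᵀ * P.q 1 = 0 := zsymm (hq1q' (0+2) (by omega))
      have E0 : (P.q (0+2))ᵀ * (A * P.q 1) = P.βs 0 + (P.q (0+2))ᵀ * (vk * P.β1ᵀ) := by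
        rw [hAq1]
        simp only [Matrix.mul_add, mul1 ho, mulz hw, mulz g1, add_zero, zero_add]
      have hq01 : (P.q 1)ᵀ * P.q (0+1) = 1 := P.horth 1 (by omega)
      have hq1Z : (P.q 1)ᵀ * (A * P.q (0+2) - P.q (0+1) * (P.βs 0)ᵀ)
          = P.β1 * (vkᵀ * P.q (0+2)) := by
        rw [Matrix.mul_sub, transposed hAT E0, mul1 hq01]
        simp only [Matrix.transpose_add, Matrix.transpose_mul, Matrix.transpose_transpose,
          Matrix.mul_assoc]
        abel
      have hWZ : Wᵀ * (A * P.q (0+2) - P.q (0+1) * (P.βs 0)ᵀ) = Wᵀ * (A * P.q (0+2)) := by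
        rw [Matrix.mul_sub, mulz (hWq' (0+1) (by omega)), sub_zero]
      have gv : (P.q (0+2))ᵀ * P.q (0+1) = 0 := zsymm (hq1q' (0+2) (by omega))
      have hvZ : (P.q (0+2))ᵀ * (A * P.q (0+2) - P.q (0+1) * (P.βs 0)ᵀ)
          = (P.q (0+2))ᵀ * (A * P.q (0+2)) := by
        rw [Matrix.mul_sub, mulz gv, sub_zero]
      rw [h3 0, hWZ, hq1Z, hvZ]
      simp only [Matrix.mul_assoc]
      abel
    · -- j = i + 1
      have hw : (P.q (i+1+2))ᵀ * W = 0 := zsymm (hWq' (i+1+2) (by omega))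
      have g1 : (P.q (i+1+2))ᵀ * P.q 1 = 0 := zsymm (hq1q' (i+1+2) (by omega))
      have g2 : (P.q (i+1+2))ᵀ * P.q 2 = 0 := zsymm (horth' (i+1+2) 2 (by omega) (by omega))
      have E : (P.q (i+1+2))ᵀ * (A * P.q 1) = (P.q (i+1+2))ᵀ * (vk * P.β1ᵀ) := by
        rw [hAq1]
        simp only [Matrix.mul_add, mulz g2, mulz hw, mulz g1, add_zero, zero_add]
      have hq1mid : (P.q 1)ᵀ * P.q (i+1+1) = 0 := hq1q' (i+1+1) (by omega)
      have hq1Z : (P.q 1)ᵀ * (A * P.q (i+1+2) - P.q (i+1+1) * (P.βs (i+1))ᵀ)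
          = P.β1 * (vkᵀ * P.q (i+1+2)) := by
        rw [Matrix.mul_sub, transposed hAT E, mulz hq1mid, sub_zero]
        simp only [Matrix.transpose_mul, Matrix.transpose_transpose, Matrix.mul_assoc]
      have hWmid : Wᵀ * P.q (i+1+1) = 0 := hWq' (i+1+1) (by omega)
      have hWZ : Wᵀ * (A * P.q (i+1+2) - P.q (i+1+1) * (P.βs (i+1))ᵀ)
          = Wᵀ * (A * P.q (i+1+2)) := by
        rw [Matrix.mul_sub, mulz hWmid, sub_zero]
      have gv : (P.q (i+1+2))ᵀ * P.q (i+1+1) = 0 :=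
        zsymm (horth' (i+1+2) (i+1+1) (by omega) (by omega))
      have hvZ : (P.q (i+1+2))ᵀ * (A * P.q (i+1+2) - P.q (i+1+1) * (P.βs (i+1))ᵀ)
          = (P.q (i+1+2))ᵀ * (A * P.q (i+1+2)) := by
        rw [Matrix.mul_sub, mulz gv, sub_zero]
      rw [h3 (i+1), hWZ, hq1Z, hvZ]
      simp only [Matrix.mul_assoc]
      abel
end
end

section
/- Consider the continuation process generated from a symmetric $A \in \mathbb{R}^{n\times n}$, block vectors $v_{k-1}, v_k \in \mathbb{R}^{n\times p}$, blocks $\alpha_k, \beta_k \in \mathbb{R}^{p\times p}$, and $W_k \in \mathbb{R}^{n\times m}$ with $W_k^T W_k = I_m$. Then for all $j > 3$, $q_{k+1}^T A q_{k+j-1} = \beta_{k+1} v_k^T q_{k+j-1}$, while for $j = 3$, $q_{k+1}^T A q_{k+2} = \beta_{k+1} v_k^T q_{k+2} + \beta_{k+2}^T$. -/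
open Matrix
open scoped Matrix.Norms.L2Operator

noncomputable section

namespace Stmt7Aux

lemma full_rank_cancel {r c k : ℕ} {B : Matrix (Fin r) (Fin c) ℝ}
    (hB : B.rank = r) {M : Matrix (Fin k) (Fin r) ℝ} (h : M * B = 0) : M = 0 := by
  have hsurj : Function.Surjective B.mulVecLin := by
    rw [← LinearMap.range_eq_top]
    apply Submodule.eq_top_of_finrank_eq
    simpa [Matrix.rank] using hB
  ext i j
  obtain ⟨w, hw⟩ := hsurj (Pi.single j 1)
  have h0 : M *ᵥ (Pi.single j 1) = 0 := by
    rw [← show B *ᵥ w = Pi.single j 1 from hw, Matrix.mulVec_mulVec, h]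
    simp
  have := congrFun h0 i
  simpa using this

lemma mz {a b c d : ℕ} {X : Matrix (Fin a) (Fin b) ℝ} {Y : Matrix (Fin b) (Fin c) ℝ}
    (h : X * Y = 0) (Z : Matrix (Fin c) (Fin d) ℝ) : X * (Y * Z) = 0 := by
  rw [← Matrix.mul_assoc, h, Matrix.zero_mul]

lemma mo {a b d : ℕ} {X : Matrix (Fin a) (Fin b) ℝ} {Y : Matrix (Fin b) (Fin a) ℝ}
    (h : X * Y = 1) (Z : Matrix (Fin a) (Fin d) ℝ) : X * (Y * Z) = Z := by
  rw [← Matrix.mul_assoc, h, Matrix.one_mul]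

lemma tr0 {a b c : ℕ} {X : Matrix (Fin a) (Fin b) ℝ} {Y : Matrix (Fin a) (Fin c) ℝ}
    (h : Xᵀ * Y = 0) : Yᵀ * X = 0 := by
  have := congrArg Matrix.transpose h
  simpa [Matrix.transpose_mul] using this

end Stmt7Aux

open Stmt7Aux

/-- in the continuation process, for `j > 3` (i.e. `q_{k+j-1} = q_{k+i}`
with `i ≥ 3`) one has `q_{k+1}ᵀ A q_{k+j-1} = β_{k+1} v_kᵀ q_{k+j-1}`, while for
`j = 3`, `q_{k+1}ᵀ A q_{k+2} = β_{k+1} v_kᵀ q_{k+2} + β_{k+2}ᵀ`. -/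
theorem stmt7 (n p m : ℕ) (A : Matrix (Fin n) (Fin n) ℝ) (hA : A.IsHermitian)
    (vkm1 vk : Matrix (Fin n) (Fin p) ℝ) (αk βk : Matrix (Fin p) (Fin p) ℝ)
    (W : Matrix (Fin n) (Fin m) ℝ)
    (P : ContProcess n p m A vkm1 vk αk βk W) :
    (∀ i, (P.q 1)ᵀ * A * P.q (i+3) = P.β1 * vkᵀ * P.q (i+3)) ∧
    ((P.q 1)ᵀ * A * P.q 2 = P.β1 * vkᵀ * P.q 2 + (P.βs 0)ᵀ) := by
  have hAT : Aᵀ = A := by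
    ext i j
    simpa [Matrix.conjTranspose_apply] using congrFun (congrFun hA i) j
  have h1 : (P.q 1)ᵀ * P.q 1 = 1 := P.horth 1 (by norm_num)
  have hWq1 : Wᵀ * P.q 1 = 0 := by
    apply full_rank_cancel P.hβ1rank
    rw [Matrix.mul_assoc, P.hq1]
    simp [Matrix.sub_mul, Matrix.mul_sub, Matrix.one_mul, Matrix.mul_assoc, mo P.hW]
  have hq1W : (P.q 1)ᵀ * W = 0 := tr0 hWq1
  -- the main orthogonality result, by strong induction
  have ORT : ∀ l, 2 ≤ l → (Wᵀ * P.q l = 0 ∧ (P.q 1)ᵀ * P.q l = 0 ∧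
      ∀ i, 2 ≤ i → i < l → (P.q i)ᵀ * P.q l = 0) := by
    intro l
    induction l using Nat.strong_induction_on with
    | _ l ih =>
      intro hl
      match l, hl with
      | 2, _ =>
        refine ⟨?_, ?_, fun i h2 h3 => absurd h3 (by omega)⟩
        · apply full_rank_cancel (P.hβsrank 0)
          rw [Matrix.mul_assoc, P.hq2]
          simp [Matrix.sub_mul, Matrix.mul_sub, Matrix.add_mul, Matrix.mul_add,
            Matrix.one_mul, Matrix.mul_assoc, mo P.hW, mz hWq1]
        · apply full_rank_cancel (P.hβsrank 0)
          rw [Matrix.mul_assoc, P.hq2]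
          simp [Matrix.sub_mul, Matrix.mul_sub, Matrix.add_mul, Matrix.mul_add,
            Matrix.one_mul, Matrix.mul_assoc, mo h1, mz hq1W]
      | (j+3), _ =>
        obtain ⟨hW2, h12, hi2⟩ := ih (j+2) (by omega) (by omega)
        have horth2 : (P.q (j+2))ᵀ * P.q (j+2) = 1 := P.horth _ (by omega)
        refine ⟨?_, ?_, ?_⟩
        · apply full_rank_cancel (P.hβsrank (j+1))
          rw [Matrix.mul_assoc, P.hq3 j]
          simp [Matrix.sub_mul, Matrix.mul_sub, Matrix.add_mul, Matrix.mul_add,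
            Matrix.one_mul, Matrix.mul_assoc, mo P.hW, mz hWq1, mz hW2]
        · apply full_rank_cancel (P.hβsrank (j+1))
          rw [Matrix.mul_assoc, P.hq3 j]
          simp [Matrix.sub_mul, Matrix.mul_sub, Matrix.add_mul, Matrix.mul_add,
            Matrix.one_mul, Matrix.mul_assoc, mo h1, mz hq1W, mz h12]
        · intro i h2i hilt
          obtain ⟨i', rfl⟩ : ∃ i', i = i' + 2 := ⟨i - 2, by omega⟩
          have horthi : (P.q (i'+2))ᵀ * P.q (i'+2) = 1 := P.horth _ (by omega)
          rcases Nat.lt_or_ge i' j with hij | hij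
          · -- i' < j : use the three-term recurrence for A * q (i'+2)
            obtain ⟨hWi, h1i, -⟩ := ih (i'+2) (by omega) (by omega)
            have hiq2 : (P.q (i'+2))ᵀ * P.q (j+2) = 0 := hi2 _ (by omega) (by omega)
            have hprev : (P.q (i'+1))ᵀ * P.q (j+2) = 0 := by
              match i' with
              | 0 => exact h12
              | (i''+1) => exact hi2 (i''+2) (by omega) (by omega)
            have hAq : A * P.q (i'+2) = P.q (i'+3) * P.βs (i'+1) +
                (W * Wᵀ + P.q 1 * (P.q 1)ᵀ + P.q (i'+2) * (P.q (i'+2))ᵀ) *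
                  (A * P.q (i'+2) - P.q (i'+1) * (P.βs i')ᵀ) +
                P.q (i'+1) * (P.βs i')ᵀ := by
              have h := P.hq3 i'
              rw [Matrix.sub_mul, Matrix.one_mul] at h
              rw [h]; abel
            have htr : (P.q (i'+2))ᵀ * A = (A * P.q (i'+2))ᵀ := by
              rw [Matrix.transpose_mul, hAT]
            rcases Nat.lt_or_ge (i'+1) j with hij2 | hij2
            · -- i' + 1 < j : everything is zero
              have hnext : (P.q (i'+3))ᵀ * P.q (j+2) = 0 := hi2 _ (by omega) (by omega)
              have hqj1 : (P.q (i'+2))ᵀ * P.q (j+1) = 0 :=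
                (ih (j+1) (by omega) (by omega)).2.2 _ (by omega) (by omega)
              have key : (P.q (i'+2))ᵀ * (A * P.q (j+2)) = 0 := by
                rw [← Matrix.mul_assoc, htr, hAq]
                simp [Matrix.transpose_add, Matrix.transpose_sub, Matrix.transpose_mul,
                  Matrix.transpose_transpose, Matrix.add_mul, Matrix.sub_mul,
                  Matrix.mul_assoc, hAT, hnext, hprev, hW2, h12, hiq2]
              apply full_rank_cancel (P.hβsrank (j+1))
              rw [Matrix.mul_assoc, P.hq3 j]
              simp [Matrix.sub_mul, Matrix.mul_sub, Matrix.add_mul, Matrix.mul_add,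
                Matrix.one_mul, Matrix.mul_assoc, mz (tr0 hWi), mz (tr0 h1i),
                mz hiq2, mz hqj1, key]
            · -- i' + 1 = j
              obtain rfl : j = i' + 1 := by omega
              have horth3 : (P.q (i'+3))ᵀ * P.q (i'+3) = 1 := P.horth _ (by omega)
              have key : (P.q (i'+2))ᵀ * (A * P.q (i'+3)) = (P.βs (i'+1))ᵀ := by
                rw [← Matrix.mul_assoc, htr, hAq]
                simp [Matrix.transpose_add, Matrix.transpose_sub, Matrix.transpose_mul,
                  Matrix.transpose_transpose, Matrix.add_mul, Matrix.sub_mul,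
                  Matrix.mul_assoc, hAT, horth3, hprev, hW2, h12, hiq2]
              apply full_rank_cancel (P.hβsrank (i'+2))
              rw [Matrix.mul_assoc, P.hq3 (i'+1)]
              simp [Matrix.sub_mul, Matrix.mul_sub, Matrix.add_mul, Matrix.mul_add,
                Matrix.one_mul, Matrix.mul_assoc, mz (tr0 hWi), mz (tr0 h1i),
                mz hiq2, mo horthi, key]
          · -- i' = j : q (j+2) is orthogonalized against directly
            obtain rfl : i' = j := by omega
            apply full_rank_cancel (P.hβsrank (i'+1))
            rw [Matrix.mul_assoc, P.hq3 i']
            simp [Matrix.sub_mul, Matrix.mul_sub, Matrix.add_mul, Matrix.mul_add,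
              Matrix.one_mul, Matrix.mul_assoc, mz (tr0 hW2), mz (tr0 h12), mo horth2]
  -- expansion of A * q 1 from the defining equation of q 2
  have hAq1 : A * P.q 1 = P.q 2 * P.βs 0 +
      (W * Wᵀ + P.q 1 * (P.q 1)ᵀ) * (A * P.q 1 - vk * P.β1ᵀ) + vk * P.β1ᵀ := by
    have h := P.hq2
    rw [Matrix.sub_mul, Matrix.one_mul] at h
    rw [h]; abel
  have htr1 : (P.q 1)ᵀ * A = (A * P.q 1)ᵀ := by rw [Matrix.transpose_mul, hAT]
  obtain ⟨hWq2, h1q2, -⟩ := ORT 2 (by omega)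
  have horthq2 : (P.q 2)ᵀ * P.q 2 = 1 := P.horth 2 (by omega)
  constructor
  · intro i
    obtain ⟨hWq3, h1q3, hi3⟩ := ORT (i+3) (by omega)
    have h2q3 : (P.q 2)ᵀ * P.q (i+3) = 0 := hi3 2 (by omega) (by omega)
    rw [htr1, hAq1]
    simp [Matrix.transpose_add, Matrix.transpose_sub, Matrix.transpose_mul,
      Matrix.transpose_transpose, Matrix.add_mul, Matrix.sub_mul,
      Matrix.mul_assoc, hAT, hWq3, h1q3, h2q3]
  · rw [htr1, hAq1]
    simp [Matrix.transpose_add, Matrix.transpose_sub, Matrix.transpose_mul,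
      Matrix.transpose_transpose, Matrix.add_mul, Matrix.sub_mul,
      Matrix.mul_assoc, hAT, hWq2, h1q2, horthq2]
    abel
end
end

section
/- Consider the continuation process run with inputs $v_{k-1}, v_k, \alpha_k, \beta_k$, and $W_k$ obtained from $k$ iterations of a perturbed block Lanczos relation $A V_k = V_k T_k + v_{k+1}\beta_{k+1}^{FP} e_k^T + \Delta V_k$ (with $V_k = [V_{k-1}, v_k]$, $\Delta V_k = [\Delta v_1,\dots,\Delta v_k]$), where $T_k S_m^{(k)} = S_m^{(k)}\Theta_m^{(k)}$ with $\Theta_m^{(k)}$ diagonal and $S_m^{(k)T} S_m^{(k)} = I_m$, and $Z_m^{(k)} := V_k S_m^{(k)} = W_k R_k$ is a QR factorization with $W_k^T W_k = I_m$ and $R_k$ invertible; set $\rho_k = \|R_k^{-1}\|$, $r_k^T = [v_k^T V_{k-1}, 0_p]$, $F_k = v_k^T v_k - I_p$, $h_k = W_k W_k^T(A v_k - v_k\alpha_k - v_{k-1}\beta_k^T)$, and $h_{k+j} = W_k W_k^T A q_{k+j} + q_{k+1}\beta_{k+1} v_k^T q_{k+j}$ for $j \ge 2$. Then for every $j \ge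 2$, $\big\| h_{k+j} - q_{k+1}\beta_{k+1} v_k^T q_{k+j} \big\| \le \big(\|v_k\| + \rho_k\|r_k\|\big)\big(\|h_k\| + \|\Delta v_k\|\big) + \rho_k\big(\|v_{k+1}\beta_{k+1}^{FP}\|\,\|F_k\| + \|\Delta V_k\|\big)$. -/
open Matrix
open scoped Matrix.Norms.L2Operator

noncomputable section

lemma cancel_of_fullrank {a b c : ℕ} (B : Matrix (Fin a) (Fin b) ℝ) (hB : B.rank = a)
    {M : Matrix (Fin c) (Fin a) ℝ} (h : M * B = 0) : M = 0 := by
  have hr : LinearMap.range B.mulVecLin = ⊤ := by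
    apply Submodule.eq_top_of_finrank_eq
    rw [show Module.finrank ℝ ↥(LinearMap.range B.mulVecLin) = B.rank from rfl, hB,
      Module.finrank_fintype_fun_eq_card, Fintype.card_fin]
  have hsurj : Function.Surjective B.mulVecLin := LinearMap.range_eq_top.mp hr
  ext i j
  obtain ⟨x, hx⟩ := hsurj (Pi.single j 1)
  have h2 : M *ᵥ Pi.single j 1 = 0 := by
    rw [← hx, Matrix.mulVecLin_apply, Matrix.mulVec_mulVec, h, Matrix.zero_mulVec]
  simpa [Matrix.mulVec_single] using congrFun h2 i

lemma l2_norm_one_le {ι : Type*} [Fintype ι] [DecidableEq ι] :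
    ‖(1 : Matrix ι ι ℝ)‖ ≤ 1 := by
  rw [Matrix.l2_opNorm_def]
  apply ContinuousLinearMap.opNorm_le_bound _ zero_le_one
  intro x
  rw [one_mul]
  apply le_of_eq
  congr 1
  simp [Matrix.toEuclideanLin_apply, Matrix.one_mulVec]

lemma l2_norm_transpose {ι κ : Type*} [Fintype ι] [Fintype κ] [DecidableEq ι] [DecidableEq κ]
    (M : Matrix ι κ ℝ) : ‖Mᵀ‖ = ‖M‖ := by
  rw [← Matrix.conjTranspose_eq_transpose_of_trivial]
  exact Matrix.l2_opNorm_conjTranspose M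

lemma l2_norm_le_one_of_orth {ι κ : Type*} [Fintype ι] [Fintype κ] [DecidableEq κ]
    (M : Matrix ι κ ℝ) (h : Mᵀ * M = 1) : ‖M‖ ≤ 1 := by
  have h1 : ‖Mᴴ * M‖ = ‖M‖ * ‖M‖ := Matrix.l2_opNorm_conjTranspose_mul_self M
  rw [Matrix.conjTranspose_eq_transpose_of_trivial, h] at h1
  nlinarith [norm_nonneg M, l2_norm_one_le (ι := κ)]


/-- `e_kᵀ = [0_p, …, 0_p, I_p] ∈ ℝ^{p × (k+1)p}`, selecting the last block. -/
def eL (k p : ℕ) : Matrix (Fin p) (Fin (k+1) × Fin p) ℝ :=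
  Matrix.of fun t x => if x.1 = Fin.last k ∧ x.2 = t then (1:ℝ) else 0

/-- Selector of the next-to-last block: `[0_p, …, 0_p, I_p, 0_p]`. -/
def eL2 (k p : ℕ) : Matrix (Fin p) (Fin (k+1) × Fin p) ℝ :=
  Matrix.of fun t x => if (x.1 : ℕ) + 1 = k ∧ x.2 = t then (1:ℝ) else 0

lemma mul_eLT {k p : ℕ} {ι : Type*} [Fintype ι] (M : Matrix ι (Fin (k+1) × Fin p) ℝ)
    (i : ι) (b : Fin p) : (M * (eL k p)ᵀ) i b = M i (Fin.last k, b) := by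
  simp only [Matrix.mul_apply, Matrix.transpose_apply, eL, Matrix.of_apply]
  rw [Finset.sum_eq_single ((Fin.last k, b) : Fin (k+1) × Fin p)]
  · simp
  · rintro ⟨x1, x2⟩ - hne
    rcases eq_or_ne x1 (Fin.last k) with h1 | h1
    · rcases eq_or_ne x2 b with h2 | h2
      · exact absurd (by rw [h1, h2]) hne
      · simp [h2]
    · simp [h1]
  · intro h; exact absurd (Finset.mem_univ _) h

lemma eLT_mul {k p : ℕ} {ι : Type*} [Fintype ι] (N : Matrix (Fin p) ι ℝ)
    (x : Fin (k+1) × Fin p) (b : ι) :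
    ((eL k p)ᵀ * N) x b = if x.1 = Fin.last k then N x.2 b else 0 := by
  simp only [Matrix.mul_apply, Matrix.transpose_apply, eL, Matrix.of_apply, ite_mul, one_mul,
    zero_mul]
  rcases eq_or_ne x.1 (Fin.last k) with h1 | h1
  · simp [h1]
  · simp [h1]

lemma eL2T_mul {k p : ℕ} {ι : Type*} [Fintype ι] (N : Matrix (Fin p) ι ℝ)
    (x : Fin (k+1) × Fin p) (b : ι) :
    ((eL2 k p)ᵀ * N) x b = if (x.1 : ℕ) + 1 = k then N x.2 b else 0 := by
  simp only [Matrix.mul_apply, Matrix.transpose_apply, eL2, Matrix.of_apply, ite_mul, one_mul,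
    zero_mul]
  rcases eq_or_ne ((x.1 : ℕ) + 1) k with h1 | h1
  · simp [h1]
  · simp [h1]

lemma eL_mul_eLT {k p : ℕ} : eL k p * (eL k p)ᵀ = (1 : Matrix (Fin p) (Fin p) ℝ) := by
  ext t s
  rw [mul_eLT]
  simp [eL, Matrix.one_apply, eq_comm]

lemma T_mul_eLT {k p : ℕ} (α βsub : ℕ → Matrix (Fin p) (Fin p) ℝ) :
    blockTridiag p (k+1) α βsub * (eL k p)ᵀ =
      (eL k p)ᵀ * α k + (eL2 k p)ᵀ * (βsub k)ᵀ := by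
  ext x b
  rw [mul_eLT, Matrix.add_apply, eLT_mul, eL2T_mul]
  rcases x with ⟨i, a⟩
  have hik := i.isLt
  simp only [blockTridiag, Matrix.of_apply, Fin.val_last, Matrix.transpose_apply, Fin.ext_iff]
  split_ifs <;> first | omega | simp only [zero_add] | (rename_i h _; rw [h, add_zero])

lemma T_symm {k p : ℕ} (α βsub : ℕ → Matrix (Fin p) (Fin p) ℝ) (hαsym : ∀ j, (α j)ᵀ = α j) :
    (blockTridiag p (k+1) α βsub)ᵀ = blockTridiag p (k+1) α βsub := by
  ext x y
  rcases x with ⟨i, a⟩; rcases y with ⟨i', a'⟩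
  simp only [Matrix.transpose_apply, blockTridiag, Matrix.of_apply]
  have hsym : ∀ j u v, α j u v = α j v u := by
    intro j u v
    conv_lhs => rw [← hαsym j]
    rfl
  split_ifs <;> first | omega | (rename_i h1 _; rw [h1]; apply hsym) | rfl | simp [*]

set_option maxHeartbeats 1000000 in
/-- bound on `‖h_{k+j} - q_{k+1} β_{k+1} v_kᵀ q_{k+j}‖` for `j ≥ 2`, where
`h_{k+j} = W_k W_kᵀ A q_{k+j} + q_{k+1} β_{k+1} v_kᵀ q_{k+j}`, for the continuation
process run with inputs coming from a perturbed block Lanczos relation.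
(The "k" of the paper is `k+1 ≥ 1`.) -/
theorem stmt14 (n k p m : ℕ)
    (A : Matrix (Fin n) (Fin n) ℝ) (hA : A.IsHermitian)
    (α βsub : ℕ → Matrix (Fin p) (Fin p) ℝ) (hαsym : ∀ j, (α j)ᵀ = α j)
    (T : Matrix (Fin (k+1) × Fin p) (Fin (k+1) × Fin p) ℝ)
    (hT : T = blockTridiag p (k+1) α βsub)
    (V ΔV : Matrix (Fin n) (Fin (k+1) × Fin p) ℝ)
    (vkp1 : Matrix (Fin n) (Fin p) ℝ) (βFP : Matrix (Fin p) (Fin p) ℝ)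
    (hrel : A * V = V * T + vkp1 * βFP * eL k p + ΔV)
    (Sm : Matrix (Fin (k+1) × Fin p) (Fin m) ℝ) (θm : Fin m → ℝ)
    (hSm : T * Sm = Sm * Matrix.diagonal θm) (hSmo : Smᵀ * Sm = 1)
    (W : Matrix (Fin n) (Fin m) ℝ) (R : Matrix (Fin m) (Fin m) ℝ)
    (hR : IsUnit R) (hQR : V * Sm = W * R)
    (vk vkm1 Δvk : Matrix (Fin n) (Fin p) ℝ)
    (hvk : vk = V * (eL k p)ᵀ) (hvkm1 : vkm1 = V * (eL2 k p)ᵀ)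
    (hΔvk : Δvk = ΔV * (eL k p)ᵀ)
    (P : ContProcess n p m A vkm1 vk (α k) (βsub k) W)
    (rT : Matrix (Fin p) (Fin (k+1) × Fin p) ℝ)
    (hrT : rT = vkᵀ * V - vkᵀ * vk * eL k p)
    (F : Matrix (Fin p) (Fin p) ℝ) (hF : F = vkᵀ * vk - 1)
    (hk0 : Matrix (Fin n) (Fin p) ℝ)
    (hhk0 : hk0 = W * Wᵀ * (A * vk - vk * α k - vkm1 * (βsub k)ᵀ)) :
    ∀ j, 2 ≤ j →
      ‖(W * Wᵀ * (A * P.q j) + P.q 1 * P.β1 * vkᵀ * P.q j) -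
          P.q 1 * P.β1 * vkᵀ * P.q j‖ ≤
        (‖vk‖ + ‖R⁻¹‖ * ‖rTᵀ‖) * (‖hk0‖ + ‖Δvk‖) +
          ‖R⁻¹‖ * (‖vkp1 * βFP‖ * ‖F‖ + ‖ΔV‖) := by
  intro j hj
  obtain ⟨i, rfl⟩ : ∃ i, j = i + 2 := ⟨j - 2, by omega⟩
  rw [add_sub_cancel_right]
  -- basic facts
  have hAT : Aᵀ = A := by
    rw [← Matrix.conjTranspose_eq_transpose_of_trivial]; exact hA
  have hRdet : IsUnit R.det := (Matrix.isUnit_iff_isUnit_det R).mp hR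
  have hRRinv : R * R⁻¹ = 1 := Matrix.mul_nonsing_inv R hRdet
  have horth1 : (P.q 1)ᵀ * P.q 1 = 1 := P.horth 1 le_rfl
  -- orthogonality of the q's to W and q1
  have hfac0 : Wᵀ * (1 - W * Wᵀ) = 0 := by
    rw [Matrix.mul_sub, Matrix.mul_one, ← Matrix.mul_assoc, P.hW, Matrix.one_mul, sub_self]
  have hWq1 : Wᵀ * P.q 1 = 0 := by
    apply cancel_of_fullrank P.β1 P.hβ1rank
    rw [Matrix.mul_assoc, P.hq1, ← Matrix.mul_assoc, hfac0, Matrix.zero_mul]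
  have hq1W : (P.q 1)ᵀ * W = 0 := by
    have h := congrArg Matrix.transpose hWq1
    rwa [Matrix.transpose_mul, Matrix.transpose_transpose, Matrix.transpose_zero] at h
  have key : ∀ i, Wᵀ * P.q (i+2) = 0 ∧ (P.q 1)ᵀ * P.q (i+2) = 0 := by
    intro i
    induction i with
    | zero =>
      have hfacW : Wᵀ * (1 - (W * Wᵀ + P.q 1 * (P.q 1)ᵀ)) = 0 := by
        rw [Matrix.mul_sub, Matrix.mul_one, Matrix.mul_add, ← Matrix.mul_assoc, P.hW,
          Matrix.one_mul, ← Matrix.mul_assoc, hWq1, Matrix.zero_mul, add_zero, sub_self]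
      have hfac1 : (P.q 1)ᵀ * (1 - (W * Wᵀ + P.q 1 * (P.q 1)ᵀ)) = 0 := by
        rw [Matrix.mul_sub, Matrix.mul_one, Matrix.mul_add, ← Matrix.mul_assoc, hq1W,
          Matrix.zero_mul, zero_add, ← Matrix.mul_assoc, horth1, Matrix.one_mul, sub_self]
      constructor
      · apply cancel_of_fullrank (P.βs 0) (P.hβsrank 0)
        rw [Matrix.mul_assoc, P.hq2, ← Matrix.mul_assoc, hfacW, Matrix.zero_mul]
      · apply cancel_of_fullrank (P.βs 0) (P.hβsrank 0)
        rw [Matrix.mul_assoc, P.hq2, ← Matrix.mul_assoc, hfac1, Matrix.zero_mul]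
    | succ i ih =>
      obtain ⟨ihW, ihq1⟩ := ih
      have hfacW : Wᵀ * (1 - (W * Wᵀ + P.q 1 * (P.q 1)ᵀ + P.q (i+2) * (P.q (i+2))ᵀ)) = 0 := by
        rw [Matrix.mul_sub, Matrix.mul_one, Matrix.mul_add, Matrix.mul_add, ← Matrix.mul_assoc,
          P.hW, Matrix.one_mul, ← Matrix.mul_assoc, hWq1, Matrix.zero_mul, add_zero,
          ← Matrix.mul_assoc, ihW, Matrix.zero_mul, add_zero, sub_self]
      have hfac1 : (P.q 1)ᵀ *
          (1 - (W * Wᵀ + P.q 1 * (P.q 1)ᵀ + P.q (i+2) * (P.q (i+2))ᵀ)) = 0 := by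
        rw [Matrix.mul_sub, Matrix.mul_one, Matrix.mul_add, Matrix.mul_add, ← Matrix.mul_assoc,
          hq1W, Matrix.zero_mul, zero_add, ← Matrix.mul_assoc, horth1, Matrix.one_mul,
          ← Matrix.mul_assoc, ihq1, Matrix.zero_mul, add_zero, sub_self]
      constructor
      · apply cancel_of_fullrank (P.βs (i+1)) (P.hβsrank (i+1))
        rw [Matrix.mul_assoc, P.hq3 i, ← Matrix.mul_assoc, hfacW, Matrix.zero_mul]
      · apply cancel_of_fullrank (P.βs (i+1)) (P.hβsrank (i+1))
        rw [Matrix.mul_assoc, P.hq3 i, ← Matrix.mul_assoc, hfac1, Matrix.zero_mul]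
  obtain ⟨hWQ, hq1Q⟩ := key i
  -- transposed QR and eigen relations
  have hQRT : Smᵀ * Vᵀ = Rᵀ * Wᵀ := by
    have h := congrArg Matrix.transpose hQR
    rwa [Matrix.transpose_mul, Matrix.transpose_mul] at h
  have hRinvT : (R⁻¹)ᵀ * Rᵀ = 1 := by
    rw [← Matrix.transpose_mul, hRRinv, Matrix.transpose_one]
  have hWT : Wᵀ = (R⁻¹)ᵀ * (Smᵀ * Vᵀ) := by
    rw [hQRT, ← Matrix.mul_assoc, hRinvT, Matrix.one_mul]
  have hTsym : Tᵀ = T := by rw [hT]; exact T_symm α βsub hαsym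
  have hSmT : Smᵀ * T = Matrix.diagonal θm * Smᵀ := by
    have h := congrArg Matrix.transpose hSm
    rwa [Matrix.transpose_mul, Matrix.transpose_mul, hTsym, Matrix.diagonal_transpose] at h
  -- the three-term relation restricted to the last block column
  have hrelT : A * vk = vk * α k + vkm1 * (βsub k)ᵀ + vkp1 * βFP + Δvk := by
    have h := congrArg (fun M => M * (eL k p)ᵀ) hrel
    rw [Matrix.add_mul, Matrix.add_mul, Matrix.mul_assoc V T, hT, T_mul_eLT,
      Matrix.mul_assoc (vkp1 * βFP), eL_mul_eLT, Matrix.mul_one, Matrix.mul_add,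
      ← Matrix.mul_assoc V, ← Matrix.mul_assoc V, ← hvk, ← hvkm1, ← hΔvk,
      Matrix.mul_assoc A V, ← hvk] at h
    rw [h]
  have hvb : vkp1 * βFP = hk0 + P.q 1 * P.β1 - Δvk := by
    have h1 : P.q 1 * P.β1 = (A * vk - vk * α k - vkm1 * (βsub k)ᵀ) - hk0 := by
      rw [P.hq1, hhk0, Matrix.sub_mul, Matrix.one_mul]
    have h2 : A * vk - vk * α k - vkm1 * (βsub k)ᵀ = vkp1 * βFP + Δvk := by
      rw [hrelT]; abel
    rw [h1, h2]; abel
  -- key cancellations and decompositions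
  have e4 : (vkp1 * βFP)ᵀ * P.q (i+2) = (hk0 - Δvk)ᵀ * P.q (i+2) := by
    rw [hvb, show hk0 + P.q 1 * P.β1 - Δvk = hk0 - Δvk + P.q 1 * P.β1 from by abel,
      Matrix.transpose_add, Matrix.add_mul, Matrix.transpose_mul, Matrix.mul_assoc, hq1Q,
      Matrix.mul_zero, add_zero]
  have heLT : (eL k p)ᵀ = Vᵀ * vk - rTᵀ - (eL k p)ᵀ * F := by
    rw [hrT, hF]
    simp only [Matrix.transpose_sub, Matrix.transpose_mul, Matrix.transpose_transpose,
      Matrix.mul_sub, Matrix.mul_one, Matrix.transpose_one, Matrix.mul_assoc]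
    abel
  have e1 : Wᵀ * (A * P.q (i+2)) = (R⁻¹)ᵀ * (Smᵀ * (Vᵀ * (A * P.q (i+2)))) := by
    rw [hWT]; simp only [Matrix.mul_assoc]
  have e2 : Vᵀ * (A * P.q (i+2)) =
      Tᵀ * (Vᵀ * P.q (i+2)) + (eL k p)ᵀ * ((vkp1 * βFP)ᵀ * P.q (i+2))
        + ΔVᵀ * P.q (i+2) := by
    rw [← Matrix.mul_assoc, show Vᵀ * A = (A * V)ᵀ from by rw [Matrix.transpose_mul, hAT],
      hrel, Matrix.transpose_add, Matrix.transpose_add, Matrix.transpose_mul V T,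
      Matrix.transpose_mul (vkp1 * βFP) (eL k p), Matrix.add_mul, Matrix.add_mul]
    simp only [Matrix.mul_assoc]
  have e3 : Smᵀ * (Tᵀ * (Vᵀ * P.q (i+2))) = 0 := by
    rw [hTsym, ← Matrix.mul_assoc, hSmT, Matrix.mul_assoc, ← Matrix.mul_assoc Smᵀ, hQRT,
      Matrix.mul_assoc Rᵀ, hWQ, Matrix.mul_zero, Matrix.mul_zero]
  have e5 : (eL k p)ᵀ * ((vkp1 * βFP)ᵀ * P.q (i+2)) =
      Vᵀ * (vk * ((vkp1 * βFP)ᵀ * P.q (i+2))) - rTᵀ * ((vkp1 * βFP)ᵀ * P.q (i+2))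
        - (eL k p)ᵀ * (F * ((vkp1 * βFP)ᵀ * P.q (i+2))) := by
    conv_lhs => rw [heLT]
    rw [Matrix.sub_mul, Matrix.sub_mul]
    simp only [Matrix.mul_assoc]
  -- the main identity
  have hE : Wᵀ * (A * P.q (i+2)) =
      Wᵀ * (vk * ((vkp1 * βFP)ᵀ * P.q (i+2)))
        - (R⁻¹)ᵀ * (Smᵀ * (rTᵀ * ((vkp1 * βFP)ᵀ * P.q (i+2))))
        - (R⁻¹)ᵀ * (Smᵀ * ((eL k p)ᵀ * (F * ((vkp1 * βFP)ᵀ * P.q (i+2)))))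
        + (R⁻¹)ᵀ * (Smᵀ * (ΔVᵀ * P.q (i+2))) := by
    rw [e1, e2]
    simp only [Matrix.mul_add]
    rw [e3, Matrix.mul_zero, zero_add, e5]
    simp only [Matrix.mul_sub]
    rw [show (R⁻¹)ᵀ * (Smᵀ * (Vᵀ * (vk * ((vkp1 * βFP)ᵀ * P.q (i+2)))))
          = Wᵀ * (vk * ((vkp1 * βFP)ᵀ * P.q (i+2))) from by
        rw [hWT]; simp only [Matrix.mul_assoc]]
  -- norms
  have nW : ‖W‖ ≤ 1 := l2_norm_le_one_of_orth W P.hW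
  have nWT : ‖Wᵀ‖ ≤ 1 := by rw [l2_norm_transpose]; exact nW
  have nSm : ‖Smᵀ‖ ≤ 1 := by rw [l2_norm_transpose]; exact l2_norm_le_one_of_orth Sm hSmo
  have nQ : ‖P.q (i+2)‖ ≤ 1 := l2_norm_le_one_of_orth _ (P.horth (i+2) (by omega))
  have neL : ‖(eL k p)ᵀ‖ ≤ 1 := by
    apply l2_norm_le_one_of_orth
    rw [Matrix.transpose_transpose]; exact eL_mul_eLT
  have nRT : ‖(R⁻¹)ᵀ‖ = ‖R⁻¹‖ := l2_norm_transpose _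
  have nZ1 : ‖(vkp1 * βFP)ᵀ * P.q (i+2)‖ ≤ ‖vkp1 * βFP‖ := by
    calc ‖(vkp1 * βFP)ᵀ * P.q (i+2)‖ ≤ ‖(vkp1 * βFP)ᵀ‖ * ‖P.q (i+2)‖ :=
          Matrix.l2_opNorm_mul _ _
      _ ≤ ‖vkp1 * βFP‖ * 1 := by
          rw [l2_norm_transpose]
          exact mul_le_mul_of_nonneg_left nQ (norm_nonneg _)
      _ = ‖vkp1 * βFP‖ := mul_one _
  have nZ2 : ‖(vkp1 * βFP)ᵀ * P.q (i+2)‖ ≤ ‖hk0‖ + ‖Δvk‖ := by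
    rw [e4]
    calc ‖(hk0 - Δvk)ᵀ * P.q (i+2)‖ ≤ ‖(hk0 - Δvk)ᵀ‖ * ‖P.q (i+2)‖ := Matrix.l2_opNorm_mul _ _
      _ ≤ (‖hk0‖ + ‖Δvk‖) * 1 := by
          apply mul_le_mul _ nQ (norm_nonneg _) (by positivity)
          rw [l2_norm_transpose]; exact norm_sub_le _ _
      _ = ‖hk0‖ + ‖Δvk‖ := mul_one _
  have n1 : ‖Wᵀ * (vk * ((vkp1 * βFP)ᵀ * P.q (i+2)))‖ ≤ ‖vk‖ * (‖hk0‖ + ‖Δvk‖) := by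
    calc ‖Wᵀ * (vk * ((vkp1 * βFP)ᵀ * P.q (i+2)))‖
        ≤ ‖Wᵀ‖ * ‖vk * ((vkp1 * βFP)ᵀ * P.q (i+2))‖ := Matrix.l2_opNorm_mul _ _
      _ ≤ 1 * (‖vk‖ * ‖(vkp1 * βFP)ᵀ * P.q (i+2)‖) := by
          apply mul_le_mul nWT (Matrix.l2_opNorm_mul _ _) (norm_nonneg _) zero_le_one
      _ = ‖vk‖ * ‖(vkp1 * βFP)ᵀ * P.q (i+2)‖ := one_mul _
      _ ≤ ‖vk‖ * (‖hk0‖ + ‖Δvk‖) := mul_le_mul_of_nonneg_left nZ2 (norm_nonneg _)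
  have n2 : ‖(R⁻¹)ᵀ * (Smᵀ * (rTᵀ * ((vkp1 * βFP)ᵀ * P.q (i+2))))‖
      ≤ ‖R⁻¹‖ * (‖rTᵀ‖ * (‖hk0‖ + ‖Δvk‖)) := by
    calc ‖(R⁻¹)ᵀ * (Smᵀ * (rTᵀ * ((vkp1 * βFP)ᵀ * P.q (i+2))))‖
        ≤ ‖(R⁻¹)ᵀ‖ * ‖Smᵀ * (rTᵀ * ((vkp1 * βFP)ᵀ * P.q (i+2)))‖ := Matrix.l2_opNorm_mul _ _
      _ ≤ ‖(R⁻¹)ᵀ‖ * (‖Smᵀ‖ * ‖rTᵀ * ((vkp1 * βFP)ᵀ * P.q (i+2))‖) :=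
          mul_le_mul_of_nonneg_left (Matrix.l2_opNorm_mul _ _) (norm_nonneg _)
      _ ≤ ‖(R⁻¹)ᵀ‖ * (1 * (‖rTᵀ‖ * ‖(vkp1 * βFP)ᵀ * P.q (i+2)‖)) := by
          apply mul_le_mul_of_nonneg_left _ (norm_nonneg _)
          exact mul_le_mul nSm (Matrix.l2_opNorm_mul _ _) (norm_nonneg _) zero_le_one
      _ = ‖R⁻¹‖ * (‖rTᵀ‖ * ‖(vkp1 * βFP)ᵀ * P.q (i+2)‖) := by rw [nRT, one_mul]
      _ ≤ ‖R⁻¹‖ * (‖rTᵀ‖ * (‖hk0‖ + ‖Δvk‖)) := by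
          apply mul_le_mul_of_nonneg_left _ (norm_nonneg _)
          exact mul_le_mul_of_nonneg_left nZ2 (norm_nonneg _)
  have n3 : ‖(R⁻¹)ᵀ * (Smᵀ * ((eL k p)ᵀ * (F * ((vkp1 * βFP)ᵀ * P.q (i+2)))))‖
      ≤ ‖R⁻¹‖ * (‖F‖ * ‖vkp1 * βFP‖) := by
    calc ‖(R⁻¹)ᵀ * (Smᵀ * ((eL k p)ᵀ * (F * ((vkp1 * βFP)ᵀ * P.q (i+2)))))‖
        ≤ ‖(R⁻¹)ᵀ‖ * ‖Smᵀ * ((eL k p)ᵀ * (F * ((vkp1 * βFP)ᵀ * P.q (i+2))))‖ :=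
          Matrix.l2_opNorm_mul _ _
      _ ≤ ‖(R⁻¹)ᵀ‖ * (‖Smᵀ‖ * ‖(eL k p)ᵀ * (F * ((vkp1 * βFP)ᵀ * P.q (i+2)))‖) :=
          mul_le_mul_of_nonneg_left (Matrix.l2_opNorm_mul _ _) (norm_nonneg _)
      _ ≤ ‖(R⁻¹)ᵀ‖ * (1 * (‖(eL k p)ᵀ‖ * ‖F * ((vkp1 * βFP)ᵀ * P.q (i+2))‖)) := by
          apply mul_le_mul_of_nonneg_left _ (norm_nonneg _)
          exact mul_le_mul nSm (Matrix.l2_opNorm_mul _ _) (norm_nonneg _) zero_le_one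
      _ ≤ ‖(R⁻¹)ᵀ‖ * (1 * (1 * (‖F‖ * ‖(vkp1 * βFP)ᵀ * P.q (i+2)‖))) := by
          apply mul_le_mul_of_nonneg_left _ (norm_nonneg _)
          apply mul_le_mul_of_nonneg_left _ zero_le_one
          exact mul_le_mul neL (Matrix.l2_opNorm_mul _ _) (norm_nonneg _) zero_le_one
      _ = ‖R⁻¹‖ * (‖F‖ * ‖(vkp1 * βFP)ᵀ * P.q (i+2)‖) := by rw [nRT, one_mul, one_mul]
      _ ≤ ‖R⁻¹‖ * (‖F‖ * ‖vkp1 * βFP‖) := by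
          apply mul_le_mul_of_nonneg_left _ (norm_nonneg _)
          exact mul_le_mul_of_nonneg_left nZ1 (norm_nonneg _)
  have n4 : ‖(R⁻¹)ᵀ * (Smᵀ * (ΔVᵀ * P.q (i+2)))‖ ≤ ‖R⁻¹‖ * ‖ΔV‖ := by
    calc ‖(R⁻¹)ᵀ * (Smᵀ * (ΔVᵀ * P.q (i+2)))‖
        ≤ ‖(R⁻¹)ᵀ‖ * ‖Smᵀ * (ΔVᵀ * P.q (i+2))‖ := Matrix.l2_opNorm_mul _ _
      _ ≤ ‖(R⁻¹)ᵀ‖ * (‖Smᵀ‖ * ‖ΔVᵀ * P.q (i+2)‖) :=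
          mul_le_mul_of_nonneg_left (Matrix.l2_opNorm_mul _ _) (norm_nonneg _)
      _ ≤ ‖(R⁻¹)ᵀ‖ * (1 * (‖ΔVᵀ‖ * ‖P.q (i+2)‖)) := by
          apply mul_le_mul_of_nonneg_left _ (norm_nonneg _)
          exact mul_le_mul nSm (Matrix.l2_opNorm_mul _ _) (norm_nonneg _) zero_le_one
      _ ≤ ‖(R⁻¹)ᵀ‖ * (1 * (‖ΔVᵀ‖ * 1)) := by
          apply mul_le_mul_of_nonneg_left _ (norm_nonneg _)
          apply mul_le_mul_of_nonneg_left _ zero_le_one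
          exact mul_le_mul_of_nonneg_left nQ (norm_nonneg _)
      _ = ‖R⁻¹‖ * ‖ΔV‖ := by rw [nRT, one_mul, mul_one, l2_norm_transpose]
  -- put everything together
  have hEnorm : ‖Wᵀ * (A * P.q (i+2))‖ ≤
      ‖vk‖ * (‖hk0‖ + ‖Δvk‖) + ‖R⁻¹‖ * (‖rTᵀ‖ * (‖hk0‖ + ‖Δvk‖))
        + ‖R⁻¹‖ * (‖F‖ * ‖vkp1 * βFP‖) + ‖R⁻¹‖ * ‖ΔV‖ := by
    rw [hE]
    have t1 := norm_add_le
      (Wᵀ * (vk * ((vkp1 * βFP)ᵀ * P.q (i+2)))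
        - (R⁻¹)ᵀ * (Smᵀ * (rTᵀ * ((vkp1 * βFP)ᵀ * P.q (i+2))))
        - (R⁻¹)ᵀ * (Smᵀ * ((eL k p)ᵀ * (F * ((vkp1 * βFP)ᵀ * P.q (i+2))))))
      ((R⁻¹)ᵀ * (Smᵀ * (ΔVᵀ * P.q (i+2))))
    have t2 := norm_sub_le
      (Wᵀ * (vk * ((vkp1 * βFP)ᵀ * P.q (i+2)))
        - (R⁻¹)ᵀ * (Smᵀ * (rTᵀ * ((vkp1 * βFP)ᵀ * P.q (i+2)))))
      ((R⁻¹)ᵀ * (Smᵀ * ((eL k p)ᵀ * (F * ((vkp1 * βFP)ᵀ * P.q (i+2))))))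
    have t3 := norm_sub_le
      (Wᵀ * (vk * ((vkp1 * βFP)ᵀ * P.q (i+2))))
      ((R⁻¹)ᵀ * (Smᵀ * (rTᵀ * ((vkp1 * βFP)ᵀ * P.q (i+2)))))
    linarith
  calc ‖W * Wᵀ * (A * P.q (i+2))‖ = ‖W * (Wᵀ * (A * P.q (i+2)))‖ := by
        rw [Matrix.mul_assoc]
    _ ≤ ‖W‖ * ‖Wᵀ * (A * P.q (i+2))‖ := Matrix.l2_opNorm_mul _ _
    _ ≤ 1 * ‖Wᵀ * (A * P.q (i+2))‖ :=
        mul_le_mul_of_nonneg_right nW (norm_nonneg _)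
    _ = ‖Wᵀ * (A * P.q (i+2))‖ := one_mul _
    _ ≤ ‖vk‖ * (‖hk0‖ + ‖Δvk‖) + ‖R⁻¹‖ * (‖rTᵀ‖ * (‖hk0‖ + ‖Δvk‖))
        + ‖R⁻¹‖ * (‖F‖ * ‖vkp1 * βFP‖) + ‖R⁻¹‖ * ‖ΔV‖ := hEnorm
    _ = (‖vk‖ + ‖R⁻¹‖ * ‖rTᵀ‖) * (‖hk0‖ + ‖Δvk‖) +
          ‖R⁻¹‖ * (‖vkp1 * βFP‖ * ‖F‖ + ‖ΔV‖) := by ring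
end
end
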